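/- arXiv:2108.08898 — 5 statements merged into one kernel-verified Lean document; each statement's English description precedes it below -/
import Mathlib

section
/- For every n ≥ 3, the maximum number of 2-chains (pairs F ⊊ F') in a subfamily of 2^[n] containing no copy of the N poset is exactly C(n, ⌊n/2⌋). -/
/-- The number of 2-chains (pairs `F ⊊ F'`) in a family `F ⊆ 2^[n]`. -/
def numTwoChains (n : ℕ) (F : Finset (Finset (Fin n))) : ℕ :=
  ((F ×ˢ F).filter fun p => p.1 ⊂ p.2).card

/-- `F` contains a (weak) copy of the poset `N`: four distinct sets `A, B, C, D`
with `A ⊂ C`, `B ⊂ C`, `B ⊂ D`. -/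
def ContainsN (n : ℕ) (F : Finset (Finset (Fin n))) : Prop :=
  ∃ A ∈ F, ∃ B ∈ F, ∃ C ∈ F, ∃ D ∈ F,
    A ≠ B ∧ A ≠ C ∧ A ≠ D ∧ B ≠ C ∧ B ≠ D ∧ C ≠ D ∧
    A ⊂ C ∧ B ⊂ C ∧ B ⊂ D

open Finset
set_option linter.unusedSectionVars false
set_option linter.unusedVariables false

namespace LaN


variable {α : Type*} [DecidableEq α] [Fintype α]

lemma perm_maps (s : Equiv.Perm α) (K : Finset α) (hs : ∀ x ∉ K, s x = x) :
    ∀ x ∈ K, s x ∈ K := by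
  intro x hx
  by_contra h
  have h2 := hs _ h
  have : s x = x := s.injective h2
  exact h (by rw [this]; exact hx)

/-- Restriction of a permutation to a finset it maps onto another finset. -/
def restrictEquiv (s : Equiv.Perm α) (B K₀ : Finset α) (h : B.image s = K₀) : ↥B ≃ ↥K₀ where
  toFun x := ⟨s x, by rw [← h]; exact mem_image_of_mem s x.2⟩
  invFun y := ⟨s.symm y, by
    have hy : (y : α) ∈ B.image s := by rw [h]; exact y.2
    obtain ⟨b, hb, hbe⟩ := mem_image.1 hy
    have : s.symm y = b := by rw [← hbe]; exact s.symm_apply_apply b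
    rwa [this]⟩
  left_inv x := Subtype.ext (s.symm_apply_apply x)
  right_inv y := Subtype.ext (s.apply_symm_apply y)

/-- Glue two bijections between disjoint finsets into a permutation. -/
def glue (B D K₀ K₁ : Finset α) (f : ↥B ≃ ↥K₀) (g : ↥D ≃ ↥K₁)
    (hBD : Disjoint B D) (hK : Disjoint K₀ K₁) (hU : B ∪ D = K₀ ∪ K₁) : Equiv.Perm α where
  toFun x := if h : x ∈ B then f ⟨x, h⟩ else if h' : x ∈ D then g ⟨x, h'⟩ else x
  invFun y := if h : y ∈ K₀ then f.symm ⟨y, h⟩ else if h' : y ∈ K₁ then g.symm ⟨y, h'⟩ else y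
  left_inv x := by
    by_cases hB : x ∈ B
    · have h0 : ((f ⟨x, hB⟩ : ↥K₀) : α) ∈ K₀ := (f ⟨x, hB⟩).2
      simp only [dif_pos hB, dif_pos h0, Subtype.coe_eta, Equiv.symm_apply_apply]
    · by_cases hD : x ∈ D
      · have h1 : ((g ⟨x, hD⟩ : ↥K₁) : α) ∈ K₁ := (g ⟨x, hD⟩).2
        have h0 : ((g ⟨x, hD⟩ : ↥K₁) : α) ∉ K₀ := fun hc => (hK.forall_ne_finset hc h1) rfl
        simp only [dif_neg hB, dif_pos hD, dif_neg h0, dif_pos h1, Subtype.coe_eta,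
          Equiv.symm_apply_apply]
      · have hx : x ∉ K₀ ∪ K₁ := by rw [← hU]; simp [hB, hD]
        have h0 : x ∉ K₀ := fun hc => hx (mem_union_left _ hc)
        have h1 : x ∉ K₁ := fun hc => hx (mem_union_right _ hc)
        simp only [dif_neg hB, dif_neg hD, dif_neg h0, dif_neg h1]
  right_inv y := by
    by_cases h0 : y ∈ K₀
    · have hB : ((f.symm ⟨y, h0⟩ : ↥B) : α) ∈ B := (f.symm ⟨y, h0⟩).2
      simp only [dif_pos h0, dif_pos hB, Subtype.coe_eta, Equiv.apply_symm_apply]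
    · by_cases h1 : y ∈ K₁
      · have hD : ((g.symm ⟨y, h1⟩ : ↥D) : α) ∈ D := (g.symm ⟨y, h1⟩).2
        have hB : ((g.symm ⟨y, h1⟩ : ↥D) : α) ∉ B := fun hc => (hBD.forall_ne_finset hc hD) rfl
        simp only [dif_neg h0, dif_pos h1, dif_neg hB, dif_pos hD, Subtype.coe_eta,
          Equiv.apply_symm_apply]
      · have hy : y ∉ B ∪ D := by rw [hU]; simp [h0, h1]
        have hB : y ∉ B := fun hc => hy (mem_union_left _ hc)
        have hD : y ∉ D := fun hc => hy (mem_union_right _ hc)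
        simp only [dif_neg hB, dif_neg hD, dif_neg h0, dif_neg h1]

lemma countC (B D K₀ : Finset α) (hBD : Disjoint B D) (hK₀ : K₀ ⊆ B ∪ D)
    (hcard : K₀.card = B.card) :
    (univ.filter fun s : Equiv.Perm α =>
        (∀ x ∉ B ∪ D, s x = x) ∧ B.image s = K₀).card
      = B.card.factorial * D.card.factorial := by
  classical
  set K₁ : Finset α := (B ∪ D) \ K₀ with hK₁def
  have hK01 : Disjoint K₀ K₁ := disjoint_sdiff
  have hU : B ∪ D = K₀ ∪ K₁ := (union_sdiff_of_subset hK₀).symm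
  have hK₁card : K₁.card = D.card := by
    have h1 : (B ∪ D).card = B.card + D.card := card_union_of_disjoint hBD
    have h2 : K₁.card = (B ∪ D).card - K₀.card := card_sdiff_of_subset hK₀
    omega
  have hDimg : ∀ s : Equiv.Perm α, (∀ x ∉ B ∪ D, s x = x) → B.image s = K₀ →
      D.image s = K₁ := by
    intro s hfix himg
    apply eq_of_subset_of_card_le
    · intro y hy
      obtain ⟨d, hd, rfl⟩ := mem_image.1 hy
      have hdK : d ∈ B ∪ D := mem_union_right _ hd
      have h1 : s d ∈ B ∪ D := perm_maps s _ hfix _ hdK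
      have h2 : s d ∉ K₀ := by
        intro hc
        rw [← himg] at hc
        obtain ⟨b, hb, hbe⟩ := mem_image.1 hc
        have : b = d := s.injective hbe
        subst this
        exact (hBD.forall_ne_finset hb hd) rfl
      rw [hK₁def]
      exact mem_sdiff.2 ⟨h1, h2⟩
    · rw [hK₁card, card_image_of_injective _ s.injective]
  have htarget : (univ : Finset ((↥B ≃ ↥K₀) × (↥D ≃ ↥K₁))).card
      = B.card.factorial * D.card.factorial := by
    have e1 : ↥B ≃ ↥K₀ := Fintype.equivOfCardEq (by simp [hcard])
    have e2 : ↥D ≃ ↥K₁ := Fintype.equivOfCardEq (by simp [hK₁card])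
    rw [card_univ, Fintype.card_prod, Fintype.card_equiv e1, Fintype.card_equiv e2]
    simp
  rw [← htarget]
  refine Finset.card_bij'
    (fun s hs => (restrictEquiv s B K₀ (Finset.mem_filter.1 hs).2.2,
      restrictEquiv s D K₁ (hDimg s (Finset.mem_filter.1 hs).2.1 (Finset.mem_filter.1 hs).2.2)))
    (fun fg _ => glue B D K₀ K₁ fg.1 fg.2 hBD hK01 hU) ?_ ?_ ?_ ?_
  · intro s hs
    exact mem_univ _
  · intro fg _
    rw [Finset.mem_filter]
    refine ⟨mem_univ _, ?_, ?_⟩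
    · intro x hx
      have hB : x ∉ B := fun hc => hx (mem_union_left _ hc)
      have hD : x ∉ D := fun hc => hx (mem_union_right _ hc)
      show (if h : x ∈ B then _ else if h' : x ∈ D then _ else x) = x
      rw [dif_neg hB, dif_neg hD]
    · apply eq_of_subset_of_card_le
      · intro y hy
        obtain ⟨b, hb, rfl⟩ := mem_image.1 hy
        show (if h : b ∈ B then ((fg.1 ⟨b, h⟩ : ↥K₀) : α) else _) ∈ K₀
        rw [dif_pos hb]
        exact (fg.1 ⟨b, hb⟩).2
      · rw [hcard, card_image_of_injective _ (glue B D K₀ K₁ fg.1 fg.2 hBD hK01 hU).injective]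
  · intro s hs
    ext x
    by_cases hB : x ∈ B
    · show (if h : x ∈ B then (s x) else _) = s x
      rw [dif_pos hB]
    · by_cases hD : x ∈ D
      · show (if h : x ∈ B then _ else if h' : x ∈ D then (s x) else x) = s x
        rw [dif_neg hB, dif_pos hD]
      · show (if h : x ∈ B then _ else if h' : x ∈ D then _ else x) = s x
        rw [dif_neg hB, dif_neg hD]
        exact ((Finset.mem_filter.1 hs).2.1 x (by simp [hB, hD])).symm
  · intro fg _
    ext x
    · show (if h : (x:α) ∈ B then ((fg.1 ⟨x, h⟩ : ↥K₀) : α)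
          else if h' : (x:α) ∈ D then ((fg.2 ⟨x, h'⟩ : ↥K₁) : α) else (x:α)) = (fg.1 x : α)
      rw [dif_pos x.2, Subtype.coe_eta]
    · have hxB : (x : α) ∉ B := fun hc => (hBD.forall_ne_finset hc x.2) rfl
      show (if h : (x:α) ∈ B then ((fg.1 ⟨x, h⟩ : ↥K₀) : α)
          else if h' : (x:α) ∈ D then ((fg.2 ⟨x, h'⟩ : ↥K₁) : α) else (x:α)) = (fg.2 x : α)
      rw [dif_neg hxB, dif_pos x.2, Subtype.coe_eta]


lemma cardH (K : Finset α) :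
    (univ.filter fun s : Equiv.Perm α => ∀ x ∉ K, s x = x).card = K.card.factorial := by
  classical
  have h := countC K ∅ K (disjoint_empty_right _) (by simp) rfl
  simp only [union_empty, card_empty, Nat.factorial_zero, mul_one] at h
  rw [← h]
  congr 1
  ext s
  simp only [mem_filter, mem_univ, true_and]
  constructor
  · intro hfix
    refine ⟨hfix, eq_of_subset_of_card_le (fun y hy => ?_) ?_⟩
    · obtain ⟨b, hb, rfl⟩ := mem_image.1 hy
      exact perm_maps s K hfix b hb
    · rw [card_image_of_injective _ s.injective]
  · exact fun h => h.1

section Claim2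

variable {n : ℕ}

/-- The Bollobás-type event: all elements of `B` come before all elements of `Cᶜ`. -/
def Ev (n : ℕ) (B C : Finset (Fin n)) : Finset (Equiv.Perm (Fin n)) :=
  univ.filter fun π => ∀ i ∈ B, ∀ j ∉ C, π i < π j

lemma claim2 (B C : Finset (Fin n)) (hBC : B ⊆ C) (π : Equiv.Perm (Fin n)) :
    (univ.filter fun s : Equiv.Perm (Fin n) =>
        (∀ x ∉ B ∪ Cᶜ, s x = x) ∧ ∀ i ∈ B, ∀ j ∉ C, π (s i) < π (s j)).card
      = B.card.factorial * (Cᶜ).card.factorial := by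
  classical
  set K : Finset (Fin n) := B ∪ Cᶜ with hK
  have hBD : Disjoint B (Cᶜ) := disjoint_compl_right.mono_left hBC
  set g : Fin n → ℕ := fun x => (K.filter fun z => π z < π x).card with hg
  set K₀ : Finset (Fin n) := K.filter fun x => g x < B.card with hK₀
  have hmono : ∀ x ∈ K, ∀ y ∈ K, π x < π y → g x < g y := by
    intro x hx y hy hxy
    apply card_lt_card
    constructor
    · intro z hz
      rw [mem_filter] at hz ⊢
      exact ⟨hz.1, hz.2.trans hxy⟩
    · intro hsub
      have : x ∈ K.filter fun z => π z < π x := hsub (mem_filter.2 ⟨hx, hxy⟩)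
      exact absurd (mem_filter.1 this).2 (lt_irrefl _)
  have hK₀sub : K₀ ⊆ K := filter_subset _ _
  have hBcardle : B.card ≤ K.card := card_le_card (subset_union_left)
  have hK₀card : K₀.card = B.card := by
    have hginj : Set.InjOn g K := by
      intro x hx y hy hxy
      by_contra hne
      rcases lt_or_gt_of_ne (fun hc : π x = π y => hne (π.injective hc)) with h | h
      · exact absurd hxy (Nat.ne_of_lt (hmono x hx y hy h))
      · exact absurd hxy.symm (Nat.ne_of_lt (hmono y hy x hx h))
    have hglt : ∀ x ∈ K, g x < K.card := by
      intro x hx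
      have : (K.filter fun z => π z < π x) ⊆ K.erase x := by
        intro z hz
        rw [mem_filter] at hz
        refine mem_erase.2 ⟨?_, hz.1⟩
        intro hc; subst hc; exact absurd hz.2 (lt_irrefl _)
      calc g x ≤ (K.erase x).card := card_le_card this
        _ < K.card := card_erase_lt_of_mem hx
    have himgK : K.image g = Finset.range K.card := by
      apply eq_of_subset_of_card_le
      · intro y hy
        obtain ⟨x, hx, rfl⟩ := mem_image.1 hy
        exact mem_range.2 (hglt x hx)
      · rw [Finset.card_range, card_image_of_injOn hginj]
    have h1 : K₀.image g = Finset.range B.card := by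
      have h2 := Finset.filter_image (f := g) (s := K) (p := fun t => t < B.card)
      rw [hK₀, ← h2, himgK]
      ext a
      simp only [mem_filter, mem_range]
      omega
    rw [← card_image_of_injOn (hginj.mono (fun x hx => hK₀sub hx)), h1, Finset.card_range]
  have hc := countC B (Cᶜ) K₀ hBD hK₀sub hK₀card
  rw [← hK] at hc
  rw [← hc]
  congr 1
  ext s
  simp only [mem_filter, mem_univ, true_and]
  constructor
  · rintro ⟨hfix, hord⟩
    refine ⟨hfix, eq_of_subset_of_card_le (fun y hy => ?_) ?_⟩
    · obtain ⟨i, hi, rfl⟩ := mem_image.1 hy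
      have hsiK : s i ∈ K := perm_maps s K hfix i (mem_union_left _ hi)
      refine mem_filter.2 ⟨hsiK, ?_⟩
      have hsubset : (K.filter fun z => π z < π (s i)) ⊆ (B.erase i).image s := by
        intro z hz
        rw [mem_filter] at hz
        set w := s.symm z with hw
        have hsw : s w = z := s.apply_symm_apply z
        have hwK : w ∈ K := by
          by_contra hc
          have h3 : w = z := by rw [← hsw, hfix w hc]
          rw [h3] at hc
          exact hc hz.1
        have hwB : w ∈ B := by
          rcases mem_union.1 hwK with h | h
          · exact h
          · exfalso
            have := hord i hi w (by simpa using h)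
            rw [hsw] at this
            exact absurd (this.trans hz.2) (lt_irrefl _)
        have hwne : w ≠ i := by
          intro hc
          rw [hc] at hsw
          rw [← hsw] at hz
          exact absurd hz.2 (lt_irrefl _)
        exact mem_image.2 ⟨w, mem_erase.2 ⟨hwne, hwB⟩, hsw⟩
      have hle : g (s i) ≤ (B.erase i).card := by
        calc g (s i) ≤ ((B.erase i).image s).card := card_le_card hsubset
          _ ≤ (B.erase i).card := card_image_le
      have hpos : 0 < B.card := card_pos.2 ⟨i, hi⟩
      rw [card_erase_of_mem hi] at hle
      omega
    · rw [hK₀card, card_image_of_injective _ s.injective]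
  · rintro ⟨hfix, himg⟩
    refine ⟨hfix, ?_⟩
    intro i hi j hj
    have hsi : s i ∈ K₀ := by rw [← himg]; exact mem_image_of_mem s hi
    have hjK : j ∈ K := mem_union_right _ (by simpa using hj)
    have hsj : s j ∈ K := perm_maps s K hfix j hjK
    have hsjK₀ : s j ∉ K₀ := by
      intro hc
      rw [← himg] at hc
      obtain ⟨b, hb, hbe⟩ := mem_image.1 hc
      have : b = j := s.injective hbe
      subst this
      exact hj (hBC hb)
    by_contra hc
    rcases eq_or_lt_of_le (not_lt.1 hc) with h | h
    · have : s j = s i := π.injective h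
      have : j = i := s.injective this
      subst this
      exact hj (hBC hi)
    · have := hmono (s j) hsj (s i) (hK₀sub hsi) h
      have hlt : g (s i) < B.card := (mem_filter.1 hsi).2
      exact hsjK₀ (mem_filter.2 ⟨hsj, by omega⟩)

lemma ev_card_mul (B C : Finset (Fin n)) (hBC : B ⊆ C) :
    (Ev n B C).card * (B ∪ Cᶜ).card.factorial
      = n.factorial * (B.card.factorial * (Cᶜ).card.factorial) := by
  classical
  set K : Finset (Fin n) := B ∪ Cᶜ with hK
  set H : Finset (Equiv.Perm (Fin n)) := univ.filter fun s => ∀ x ∉ K, s x = x with hH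
  have key : ∀ π : Equiv.Perm (Fin n),
      (H.filter fun s => ∀ i ∈ B, ∀ j ∉ C, π (s i) < π (s j)).card
        = B.card.factorial * (Cᶜ).card.factorial := by
    intro π
    rw [hH, filter_filter]
    have h2 := claim2 B C hBC π
    rw [← hK] at h2
    exact h2
  have inner : ∀ s : Equiv.Perm (Fin n),
      (univ.filter fun π : Equiv.Perm (Fin n) => ∀ i ∈ B, ∀ j ∉ C, π (s i) < π (s j)).card
        = (Ev n B C).card := by
    intro s
    refine Finset.card_bij' (fun π _ => π * s) (fun σ _ => σ * s⁻¹) ?_ ?_ ?_ ?_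
    · intro π hπ
      rw [Finset.mem_filter] at hπ
      simp only [Ev, Finset.mem_filter]
      refine ⟨mem_univ _, fun i hi j hj => ?_⟩
      simpa using hπ.2 i hi j hj
    · intro σ hσ
      simp only [Ev, Finset.mem_filter] at hσ
      simp only [Finset.mem_filter]
      refine ⟨mem_univ _, fun i hi j hj => ?_⟩
      simpa using hσ.2 i hi j hj
    · intro π _
      group
    · intro σ _
      group
  have dc : (univ : Finset (Equiv.Perm (Fin n))).card * (B.card.factorial * (Cᶜ).card.factorial)
      = H.card * (Ev n B C).card := by
    calc (univ : Finset (Equiv.Perm (Fin n))).card * (B.card.factorial * (Cᶜ).card.factorial)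
        = ∑ π ∈ (univ : Finset (Equiv.Perm (Fin n))),
            (H.filter fun s => ∀ i ∈ B, ∀ j ∉ C, π (s i) < π (s j)).card := by
          rw [Finset.sum_congr rfl fun π _ => key π, Finset.sum_const, smul_eq_mul]
      _ = ∑ π ∈ (univ : Finset (Equiv.Perm (Fin n))), ∑ s ∈ H,
            (if ∀ i ∈ B, ∀ j ∉ C, π (s i) < π (s j) then 1 else 0) := by
          refine Finset.sum_congr rfl fun π _ => ?_
          rw [Finset.card_filter]
      _ = ∑ s ∈ H, ∑ π ∈ (univ : Finset (Equiv.Perm (Fin n))),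
            (if ∀ i ∈ B, ∀ j ∉ C, π (s i) < π (s j) then 1 else 0) := Finset.sum_comm
      _ = ∑ s ∈ H, (Ev n B C).card := by
          refine Finset.sum_congr rfl fun s _ => ?_
          rw [← Finset.card_filter]
          exact inner s
      _ = H.card * (Ev n B C).card := by rw [Finset.sum_const, smul_eq_mul]
  have hHcard : H.card = K.card.factorial := by
    rw [← cardH K]
    congr 1
    ext s
    rw [hH]
    simp [Finset.mem_filter]
  rw [hHcard] at dc
  rw [Finset.card_univ, Fintype.card_perm, Fintype.card_fin] at dc
  calc (Ev n B C).card * K.card.factorial = K.card.factorial * (Ev n B C).card := Nat.mul_comm _ _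
    _ = n.factorial * (B.card.factorial * (Cᶜ).card.factorial) := dc.symm

lemma central_mono : ∀ {k m : ℕ}, k ≤ m → k.choose (k / 2) ≤ m.choose (m / 2) := by
  have step : ∀ m : ℕ, m.choose (m / 2) ≤ (m + 1).choose ((m + 1) / 2) := by
    intro m
    rcases Nat.even_or_odd m with ⟨j, hj⟩ | ⟨j, hj⟩
    · have h1 : (m + 1) / 2 = m / 2 := by omega
      rw [h1]
      exact Nat.choose_le_choose _ (by omega)
    · have h1 : m / 2 = j := by omega
      have h2 : (m + 1) / 2 = j + 1 := by omega
      rw [h1, h2, show m + 1 = m + 1 from rfl]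
      have h3 : m + 1 = (2 * j + 1) + 1 := by omega
      rw [h3, Nat.choose_succ_succ, show 2 * j + 1 = m from by omega, ← h1]
      exact Nat.le_add_right _ _
  intro k m h
  induction m with
  | zero =>
    have : k = 0 := by omega
    subst this
    exact le_refl _
  | succ m ih =>
    rcases Nat.lt_or_ge k (m + 1) with h' | h'
    · exact (ih (by omega)).trans (step m)
    · have : k = m + 1 := by omega
      subst this
      exact le_refl _

lemma three_central {m : ℕ} (hm : 1 ≤ m) :
    3 * m.choose (m / 2) ≤ (m + 2).choose ((m + 2) / 2) := by
  rcases Nat.even_or_odd m with ⟨j, hj⟩ | ⟨j, hj⟩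
  · -- m even, m = 2j with j ≥ 1; write j = jj + 1
    obtain ⟨jj, rfl⟩ : ∃ jj, j = jj + 1 := ⟨j - 1, by omega⟩
    have hm2 : m = 2 * jj + 2 := by omega
    subst hm2
    have hd1 : (2 * jj + 2) / 2 = jj + 1 := by omega
    have hd2 : (2 * jj + 2 + 2) / 2 = jj + 2 := by omega
    rw [hd1, hd2]
    have e1 : (2 * jj + 2 + 2).choose (jj + 2)
        = (2 * jj + 2 + 1).choose (jj + 1) + (2 * jj + 2 + 1).choose (jj + 2) :=
      Nat.choose_succ_succ _ _
    have e2 : (2 * jj + 2 + 1).choose (jj + 1)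
        = (2 * jj + 2).choose jj + (2 * jj + 2).choose (jj + 1) := Nat.choose_succ_succ _ _
    have e3 : (2 * jj + 2 + 1).choose (jj + 2)
        = (2 * jj + 2).choose (jj + 1) + (2 * jj + 2).choose (jj + 2) := Nat.choose_succ_succ _ _
    have i1 : (2 * jj + 2).choose (jj + 1) ≤ 2 * (2 * jj + 2).choose jj := by
      have hid := Nat.choose_succ_right_eq (2 * jj + 2) jj
      have hsub : 2 * jj + 2 - jj = jj + 2 := by omega
      rw [hsub] at hid
      have : (2 * jj + 2).choose (jj + 1) * (jj + 1) ≤ (2 * (2 * jj + 2).choose jj) * (jj + 1) := by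
        rw [hid]
        nlinarith [Nat.zero_le ((2 * jj + 2).choose jj)]
      exact Nat.le_of_mul_le_mul_right this (by omega)
    have i2 : (2 * jj + 2).choose (jj + 1) ≤ 2 * (2 * jj + 2).choose (jj + 2) := by
      have hid := Nat.choose_succ_right_eq (2 * jj + 2) (jj + 1)
      have hsub : 2 * jj + 2 - (jj + 1) = jj + 1 := by omega
      rw [hsub] at hid
      have : (2 * jj + 2).choose (jj + 1) * (jj + 2) ≤ (2 * (2 * jj + 2).choose (jj + 2)) * (jj + 2) := by
        have : (2 * jj + 2).choose (jj + 2) * (jj + 2) = (2 * jj + 2).choose (jj + 1) * (jj + 1) := hid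
        nlinarith [Nat.zero_le ((2 * jj + 2).choose (jj + 2))]
      exact Nat.le_of_mul_le_mul_right this (by omega)
    omega
  · -- m odd, m = 2j + 1
    have h1 : m / 2 = j := by omega
    have h2 : (m + 2) / 2 = j + 1 := by omega
    rw [h1, h2]
    have hsymm : m.choose (j + 1) = m.choose j := by
      have h3 : m - (j + 1) = j := by omega
      have := Nat.choose_symm (show j + 1 ≤ m by omega)
      rw [h3] at this
      exact this.symm
    have e1 : (m + 2).choose (j + 1) = (m + 1).choose j + (m + 1).choose (j + 1) := by
      have : m + 2 = (m + 1) + 1 := rfl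
      rcases Nat.eq_or_lt_of_le (show 1 ≤ j + 1 by omega) with h | h
      · exact Nat.choose_succ_succ _ _
      · exact Nat.choose_succ_succ _ _
    have e2 : (m + 1).choose (j + 1) = m.choose j + m.choose (j + 1) := Nat.choose_succ_succ _ _
    have i1 : m.choose j ≤ (m + 1).choose j := Nat.choose_le_choose _ (by omega)
    omega

lemma ev_lower (hn : 3 ≤ n) (B C : Finset (Fin n)) (hBC : B ⊆ C)
    (hgap : B = C ∨ B.card + 2 ≤ C.card) :
    (if B = C then 1 else 3) * n.factorial ≤ n.choose (n / 2) * (Ev n B C).card := by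
  classical
  set a := B.card with ha
  set e := (Cᶜ : Finset (Fin n)).card with he
  have hKcard : (B ∪ Cᶜ).card = a + e :=
    card_union_of_disjoint (disjoint_compl_right.mono_left hBC)
  have hCle : C.card ≤ n := by
    have := card_le_card (subset_univ C)
    simpa using this
  have hecard : e = n - C.card := by
    rw [he, card_compl, Fintype.card_fin]
  have haC : a ≤ C.card := card_le_card hBC
  have hchoose : (if B = C then 1 else 3) * (a + e).choose a ≤ n.choose (n / 2) := by
    by_cases hBCeq : B = C
    · rw [if_pos hBCeq]
      have hk : a + e = n := by
        subst hBCeq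
        omega
      rw [hk, one_mul]
      exact Nat.choose_le_middle a n
    · rw [if_neg hBCeq]
      have hgap2 : a + 2 ≤ C.card := by
        rcases hgap with h | h
        · exact absurd h hBCeq
        · exact h
      have hk2 : a + e + 2 ≤ n := by omega
      calc 3 * (a + e).choose a ≤ 3 * (a + e).choose ((a + e) / 2) := by
            have := Nat.choose_le_middle a (a + e)
            omega
        _ ≤ 3 * (n - 2).choose ((n - 2) / 2) := by
            have := central_mono (show a + e ≤ n - 2 by omega)
            omega
        _ ≤ (n - 2 + 2).choose ((n - 2 + 2) / 2) := three_central (by omega)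
        _ = n.choose (n / 2) := by
            congr 1 <;> omega
  have hfact : (a + e).choose a * a.factorial * e.factorial = (a + e).factorial := by
    have h := Nat.add_choose_mul_factorial_mul_factorial e a
    rw [Nat.add_comm e a, Nat.mul_right_comm] at h
    exact h
  have hmain := ev_card_mul B C hBC
  rw [hKcard] at hmain
  -- multiply through by (a+e)!
  have hineq : ((if B = C then 1 else 3) * n.factorial) * (a + e).factorial
      ≤ (n.choose (n / 2) * (Ev n B C).card) * (a + e).factorial := by
    calc ((if B = C then 1 else 3) * n.factorial) * (a + e).factorial
        = ((if B = C then 1 else 3) * (a + e).choose a) * (n.factorial * (a.factorial * e.factorial)) := by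
          rw [← hfact]; ring
      _ ≤ n.choose (n / 2) * (n.factorial * (a.factorial * e.factorial)) :=
          Nat.mul_le_mul_right _ hchoose
      _ = n.choose (n / 2) * ((Ev n B C).card * (a + e).factorial) := by rw [← hmain]
      _ = (n.choose (n / 2) * (Ev n B C).card) * (a + e).factorial := by ring
  exact Nat.le_of_mul_le_mul_right hineq (Nat.factorial_pos _)

theorem pair_count (hn : 3 ≤ n) (I : Finset (Finset (Fin n) × Finset (Fin n)))
    (hsub : ∀ p ∈ I, p.1 ⊆ p.2)
    (hgap : ∀ p ∈ I, p.1 = p.2 ∨ p.1.card + 2 ≤ p.2.card)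
    (hcross : ∀ p ∈ I, ∀ q ∈ I, p ≠ q → ¬ p.1 ⊆ q.2) :
    (∑ p ∈ I, if p.1 = p.2 then 1 else 3) ≤ n.choose (n / 2) := by
  classical
  have hdisj : ∀ p ∈ I, ∀ q ∈ I, p ≠ q → Disjoint (Ev n p.1 p.2) (Ev n q.1 q.2) := by
    intro p hp q hq hpq
    rw [Finset.disjoint_left]
    intro π hπp hπq
    obtain ⟨x, hx1, hx2⟩ := Finset.not_subset.1 (hcross p hp q hq hpq)
    obtain ⟨y, hy1, hy2⟩ := Finset.not_subset.1 (hcross q hq p hp (Ne.symm hpq))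
    rw [Ev, Finset.mem_filter] at hπp hπq
    have h1 : π x < π y := hπp.2 x hx1 y hy2
    have h2 : π y < π x := hπq.2 y hy1 x hx2
    exact absurd (h1.trans h2) (lt_irrefl _)
  have hsum : ∑ p ∈ I, (Ev n p.1 p.2).card ≤ n.factorial := by
    calc ∑ p ∈ I, (Ev n p.1 p.2).card = (I.biUnion fun p => Ev n p.1 p.2).card :=
          (Finset.card_biUnion hdisj).symm
      _ ≤ (univ : Finset (Equiv.Perm (Fin n))).card := card_le_card (subset_univ _)
      _ = n.factorial := by rw [Finset.card_univ, Fintype.card_perm, Fintype.card_fin]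
  have hmul : (∑ p ∈ I, if p.1 = p.2 then 1 else 3) * n.factorial
      ≤ n.choose (n / 2) * n.factorial := by
    calc (∑ p ∈ I, if p.1 = p.2 then 1 else 3) * n.factorial
        = ∑ p ∈ I, (if p.1 = p.2 then 1 else 3) * n.factorial := Finset.sum_mul _ _ _
      _ ≤ ∑ p ∈ I, n.choose (n / 2) * (Ev n p.1 p.2).card := by
          refine Finset.sum_le_sum fun p hp => ?_
          exact ev_lower hn p.1 p.2 (hsub p hp) (hgap p hp)
      _ = n.choose (n / 2) * ∑ p ∈ I, (Ev n p.1 p.2).card := (Finset.mul_sum _ _ _).symm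
      _ ≤ n.choose (n / 2) * n.factorial := Nat.mul_le_mul_left _ hsum
  exact Nat.le_of_mul_le_mul_right hmul (Nat.factorial_pos _)

end Claim2



variable {n : ℕ} {F : Finset (Finset (Fin n))}

lemma mkN (hF : ¬ ContainsN n F) {A B C D : Finset (Fin n)} (hA : A ∈ F) (hB : B ∈ F)
    (hC : C ∈ F) (hD : D ∈ F) (h1 : A ⊂ C) (h2 : B ⊂ C) (h3 : B ⊂ D)
    (nAB : A ≠ B) (nAD : A ≠ D) (nCD : C ≠ D) : False :=
  hF ⟨A, hA, B, hB, C, hC, D, hD, nAB, h1.ne, nAD, h2.ne, h3.ne, nCD, h1, h2, h3⟩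

lemma no4 (hF : ¬ ContainsN n F) {A B C D : Finset (Fin n)} (hA : A ∈ F) (hB : B ∈ F)
    (hC : C ∈ F) (hD : D ∈ F) (h1 : A ⊂ B) (h2 : B ⊂ C) (h3 : C ⊂ D) : False :=
  mkN hF hB hA hC hD h2 (h1.trans h2) ((h1.trans h2).trans h3)
    h1.ne.symm (h2.trans h3).ne h3.ne

lemma mid_unique (hF : ¬ ContainsN n F) {B X X' C : Finset (Fin n)}
    (hB : B ∈ F) (hX : X ∈ F) (hX' : X' ∈ F) (hC : C ∈ F)
    (h1 : B ⊂ X) (h2 : X ⊂ C) (h1' : B ⊂ X') (h2' : X' ⊂ C) : X = X' := by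
  by_contra hne
  exact mkN hF hX' hB hC hX h2' (h1.trans h2) h1
    h1'.ne.symm (Ne.symm hne) h2.ne.symm

lemma sub_cases {s t : Finset (Fin n)} (h : s ⊆ t) : s ⊂ t ∨ s = t := by
  rcases eq_or_ne s t with he | hne
  · exact Or.inr he
  · exact Or.inl (Finset.ssubset_iff_subset_ne.2 ⟨h, hne⟩)

lemma isol (hF : ¬ ContainsN n F) {B X C W : Finset (Fin n)}
    (hB : B ∈ F) (hX : X ∈ F) (hC : C ∈ F) (hW : W ∈ F)
    (h1 : B ⊂ X) (h2 : X ⊂ C)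
    (hcomp : W ⊆ B ∨ B ⊆ W ∨ W ⊆ X ∨ X ⊆ W ∨ W ⊆ C ∨ C ⊆ W) :
    W = B ∨ W = X ∨ W = C := by
  rcases hcomp with h | h | h | h | h | h
  · rcases sub_cases h with hs | he
    · exact absurd (no4 hF hW hB hX hC hs h1 h2) (fun h => h)
    · exact Or.inl he
  · rcases sub_cases h with hs | he
    · by_cases hX' : W = X
      · exact Or.inr (Or.inl hX')
      by_cases hC' : W = C
      · exact Or.inr (Or.inr hC')
      exact absurd (mkN hF hX hB hC hW h2 (h1.trans h2) hs
        h1.ne.symm (fun hc => hX' hc.symm) (fun hc => hC' hc.symm)) (fun h => h)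
    · exact Or.inl he.symm
  · rcases sub_cases h with hs | he
    · by_cases hB' : W = B
      · exact Or.inl hB'
      exact absurd (mkN hF hW hB hX hC hs h1 (h1.trans h2)
        hB' (hs.trans h2).ne h2.ne) (fun h => h)
    · exact Or.inr (Or.inl he)
  · rcases sub_cases h with hs | he
    · by_cases hC' : W = C
      · exact Or.inr (Or.inr hC')
      exact absurd (mkN hF hB hX hC hW (h1.trans h2) h2 hs
        h1.ne (h1.trans hs).ne (fun hc => hC' hc.symm)) (fun h => h)
    · exact Or.inr (Or.inl he.symm)
  · rcases sub_cases h with hs | he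
    · by_cases hB' : W = B
      · exact Or.inl hB'
      by_cases hX' : W = X
      · exact Or.inr (Or.inl hX')
      exact absurd (mkN hF hW hB hC hX hs (h1.trans h2) h1
        hB' hX' h2.ne.symm) (fun h => h)
    · exact Or.inr (Or.inr he)
  · rcases sub_cases h with hs | he
    · exact absurd (no4 hF hB hX hC hW h1 h2 hs) (fun h => h)
    · exact Or.inr (Or.inr he.symm)


variable (n F) in
def Edges : Finset (Finset (Fin n) × Finset (Fin n)) := (F ×ˢ F).filter fun p => p.1 ⊂ p.2

lemma mem_Edges {p : Finset (Fin n) × Finset (Fin n)} :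
    p ∈ Edges n F ↔ p.1 ∈ F ∧ p.2 ∈ F ∧ p.1 ⊂ p.2 := by
  simp [Edges, Finset.mem_filter, Finset.mem_product, and_assoc]

variable (n F) in
def Etri : Finset (Finset (Fin n) × Finset (Fin n)) :=
  (Edges n F).filter fun p => ∃ W ∈ F, p.2 ⊂ W ∨ W ⊂ p.1 ∨ (p.1 ⊂ W ∧ W ⊂ p.2)

lemma mem_Etri {p : Finset (Fin n) × Finset (Fin n)} :
    p ∈ Etri n F ↔ p ∈ Edges n F ∧ ∃ W ∈ F, p.2 ⊂ W ∨ W ⊂ p.1 ∨ (p.1 ⊂ W ∧ W ⊂ p.2) := by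
  simp [Etri, Finset.mem_filter]

variable (n F) in
def Estar : Finset (Finset (Fin n) × Finset (Fin n)) := Edges n F \ Etri n F

lemma mem_Estar {p : Finset (Fin n) × Finset (Fin n)} :
    p ∈ Estar n F ↔ p ∈ Edges n F ∧
      ¬ ∃ W ∈ F, p.2 ⊂ W ∨ W ⊂ p.1 ∨ (p.1 ⊂ W ∧ W ⊂ p.2) := by
  rw [Estar, Finset.mem_sdiff]
  constructor
  · rintro ⟨h1, h2⟩
    exact ⟨h1, fun hc => h2 (mem_Etri.2 ⟨h1, hc⟩)⟩
  · rintro ⟨h1, h2⟩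
    exact ⟨h1, fun hc => h2 (mem_Etri.1 hc).2⟩

variable (n F) in
def Tri : Finset (Finset (Fin n) × Finset (Fin n)) :=
  (Edges n F).filter fun p => ∃ X ∈ F, p.1 ⊂ X ∧ X ⊂ p.2

lemma mem_Tri {p : Finset (Fin n) × Finset (Fin n)} :
    p ∈ Tri n F ↔ p ∈ Edges n F ∧ ∃ X ∈ F, p.1 ⊂ X ∧ X ⊂ p.2 := by
  simp [Tri, Finset.mem_filter]

lemma tri_sub_etri : Tri n F ⊆ Etri n F := by
  intro p hp
  rw [mem_Tri] at hp
  obtain ⟨he, X, hX, h1, h2⟩ := hp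
  exact mem_Etri.2 ⟨he, X, hX, Or.inr (Or.inr ⟨h1, h2⟩)⟩

variable (n F) in
def leafMap (p : Finset (Fin n) × Finset (Fin n)) : Finset (Fin n) :=
  if ∀ B' ∈ F, B' ⊂ p.2 → B' = p.1 then p.2 else p.1

lemma leaf_mem {p : Finset (Fin n) × Finset (Fin n)} (hp : p ∈ Estar n F) :
    leafMap n F p ∈ F := by
  have he := (mem_Estar.1 hp).1
  rw [mem_Edges] at he
  rw [leafMap]
  split
  · exact he.2.1
  · exact he.1

/-- If a star edge's bottom is the chosen leaf, then the top is the unique superset. -/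
lemma keyB (hF : ¬ ContainsN n F) {p : Finset (Fin n) × Finset (Fin n)}
    (hp : p ∈ Estar n F) (hcond : ¬ ∀ B' ∈ F, B' ⊂ p.2 → B' = p.1) :
    ∀ D ∈ F, p.1 ⊂ D → D = p.2 := by
  obtain ⟨he, hnt⟩ := mem_Estar.1 hp
  rw [mem_Edges] at he
  obtain ⟨hB, hC, hBC⟩ := he
  push_neg at hcond
  obtain ⟨B', hB', hB'C, hB'ne⟩ := hcond
  intro D hD hBD
  by_contra hDC
  by_cases hB'D : B' = D
  · -- p.1 ⊂ B' ⊂ p.2 : triple edge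
    subst hB'D
    exact hnt ⟨B', hB', Or.inr (Or.inr ⟨hBD, hB'C⟩)⟩
  · exact mkN hF hB' hB hC hD hB'C hBC hBD
      hB'ne hB'D (fun hc => hDC hc.symm)

lemma leaf_inj (hF : ¬ ContainsN n F) :
    ∀ p ∈ Estar n F, ∀ q ∈ Estar n F, leafMap n F p = leafMap n F q → p = q := by
  intro p hp q hq hleaf
  have hep := (mem_Estar.1 hp).1
  have heq := (mem_Estar.1 hq).1
  have hntp := (mem_Estar.1 hp).2
  have hntq := (mem_Estar.1 hq).2
  rw [mem_Edges] at hep heq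
  by_cases cp : ∀ B' ∈ F, B' ⊂ p.2 → B' = p.1 <;>
    by_cases cq : ∀ B' ∈ F, B' ⊂ q.2 → B' = q.1
  · -- both C-type : leaves are the tops
    rw [leafMap, if_pos cp, leafMap, if_pos cq] at hleaf
    have h1 : p.1 = q.1 := by
      apply cq p.1 hep.1
      rw [← hleaf]
      exact hep.2.2
    have h2 : p.2 = q.2 := hleaf
    exact Prod.ext h1 h2
  · -- p C-type, q B-type : leaf = p.2 = q.1, so q = (p.2, q.2) with p.1 ⊂ p.2 ⊂ q.2
    rw [leafMap, if_pos cp, leafMap, if_neg cq] at hleaf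
    exfalso
    apply hntq
    refine ⟨p.1, hep.1, Or.inr (Or.inl ?_)⟩
    rw [← hleaf]
    exact hep.2.2
  · -- p B-type, q C-type
    rw [leafMap, if_neg cp, leafMap, if_pos cq] at hleaf
    exfalso
    apply hntp
    refine ⟨q.1, heq.1, Or.inr (Or.inl ?_)⟩
    rw [hleaf]
    exact heq.2.2
  · -- both B-type : leaves are the bottoms
    rw [leafMap, if_neg cp, leafMap, if_neg cq] at hleaf
    have h2 : p.2 = q.2 :=
      keyB hF hq cq p.2 hep.2.1 (by rw [← hleaf]; exact hep.2.2)
    exact Prod.ext hleaf h2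

lemma leafMap_cases (p : Finset (Fin n) × Finset (Fin n)) :
    leafMap n F p = p.1 ∨ leafMap n F p = p.2 := by
  rw [leafMap]
  split
  · exact Or.inr rfl
  · exact Or.inl rfl

lemma leaf_antichain (hF : ¬ ContainsN n F) :
    ∀ p ∈ Estar n F, ∀ q ∈ Estar n F,
      leafMap n F p ⊆ leafMap n F q → leafMap n F p = leafMap n F q := by
  intro p hp q hq hsub
  rcases sub_cases hsub with hss | he
  · exfalso
    obtain ⟨hep, hntp⟩ := mem_Estar.1 hp
    obtain ⟨heq, hntq⟩ := mem_Estar.1 hq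
    rw [mem_Edges] at hep heq
    have hqF : leafMap n F q ∈ F := leaf_mem hq
    by_cases cp : ∀ B' ∈ F, B' ⊂ p.2 → B' = p.1
    · rw [leafMap, if_pos cp] at hss
      exact hntp ⟨leafMap n F q, hqF, Or.inl hss⟩
    · rw [leafMap, if_neg cp] at hss
      by_cases cq : ∀ B' ∈ F, B' ⊂ q.2 → B' = q.1
      · rw [leafMap, if_pos cq] at hss
        have hq2eq : q.2 = p.2 := keyB hF hp cp q.2 heq.2.1 hss
        have hq1eq : p.1 = q.1 := cq p.1 hep.1 (by rw [hq2eq]; exact hep.2.2)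
        apply cp
        intro B' hB' hx
        rw [hq1eq]
        exact cq B' hB' (by rw [hq2eq]; exact hx)
      · rw [leafMap, if_neg cq] at hss
        have hq1eq : q.1 = p.2 := keyB hF hp cp q.1 heq.1 hss
        exact hntp ⟨q.2, heq.2.1, Or.inl (by rw [← hq1eq]; exact heq.2.2)⟩
  · exact he

lemma edge_in_triple (hF : ¬ ContainsN n F) {B X C : Finset (Fin n)}
    (hB : B ∈ F) (hX : X ∈ F) (hC : C ∈ F) (h1 : B ⊂ X) (h2 : X ⊂ C)
    {p : Finset (Fin n) × Finset (Fin n)} (hpe : p ∈ Edges n F)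
    (m1 : p.1 = B ∨ p.1 = X ∨ p.1 = C) (m2 : p.2 = B ∨ p.2 = X ∨ p.2 = C) :
    p ∈ Etri n F := by
  obtain ⟨a, b⟩ := p
  have hss := (mem_Edges.1 hpe).2.2
  simp only at hss m1 m2 ⊢
  rcases m1 with rfl | rfl | rfl <;> rcases m2 with rfl | rfl | rfl
  · exact absurd hss (ssubset_irrefl _)
  · exact mem_Etri.2 ⟨hpe, C, hC, Or.inl h2⟩
  · exact mem_Etri.2 ⟨hpe, X, hX, Or.inr (Or.inr ⟨h1, h2⟩)⟩
  · exact absurd (hss.trans h1) (ssubset_irrefl _)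
  · exact absurd hss (ssubset_irrefl _)
  · exact mem_Etri.2 ⟨hpe, B, hB, Or.inr (Or.inl h1)⟩
  · exact absurd ((hss.trans h1).trans h2) (ssubset_irrefl _)
  · exact absurd (hss.trans h2) (ssubset_irrefl _)
  · exact absurd hss (ssubset_irrefl _)

lemma star_not_touch (hF : ¬ ContainsN n F) {p : Finset (Fin n) × Finset (Fin n)}
    (hp : p ∈ Estar n F) {B X C : Finset (Fin n)}
    (hB : B ∈ F) (hX : X ∈ F) (hC : C ∈ F) (h1 : B ⊂ X) (h2 : X ⊂ C)
    (S : Finset (Fin n)) (hS : S = p.1 ∨ S = p.2) :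
    ¬ (S = B ∨ S = X ∨ S = C) := by
  intro hmem
  obtain ⟨hpe, hnt⟩ := mem_Estar.1 hp
  have hmemF := mem_Edges.1 hpe
  have hss := hmemF.2.2
  have hother : (p.1 = B ∨ p.1 = X ∨ p.1 = C) ∧ (p.2 = B ∨ p.2 = X ∨ p.2 = C) := by
    rcases hS with rfl | rfl
    · refine ⟨hmem, ?_⟩
      rcases hmem with e | e | e
      · rw [e] at hss
        exact isol hF hB hX hC hmemF.2.1 h1 h2 (Or.inr (Or.inl hss.subset))
      · rw [e] at hss
        exact isol hF hB hX hC hmemF.2.1 h1 h2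
          (Or.inr (Or.inr (Or.inr (Or.inl hss.subset))))
      · rw [e] at hss
        exact isol hF hB hX hC hmemF.2.1 h1 h2
          (Or.inr (Or.inr (Or.inr (Or.inr (Or.inr hss.subset)))))
    · refine ⟨?_, hmem⟩
      rcases hmem with e | e | e
      · rw [e] at hss
        exact isol hF hB hX hC hmemF.1 h1 h2 (Or.inl hss.subset)
      · rw [e] at hss
        exact isol hF hB hX hC hmemF.1 h1 h2 (Or.inr (Or.inr (Or.inl hss.subset)))
      · rw [e] at hss
        exact isol hF hB hX hC hmemF.1 h1 h2
          (Or.inr (Or.inr (Or.inr (Or.inr (Or.inl hss.subset)))))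
  exact hnt (mem_Etri.1 (edge_in_triple hF hB hX hC h1 h2 hpe hother.1 hother.2)).2

lemma leaf_vs_tri (hF : ¬ ContainsN n F) {p q : Finset (Fin n) × Finset (Fin n)}
    (hp : p ∈ Estar n F) (hq : q ∈ Tri n F) :
    ¬ leafMap n F p ⊆ q.2 ∧ ¬ q.1 ⊆ leafMap n F p := by
  obtain ⟨hqe, X, hX, h1, h2⟩ := mem_Tri.1 hq
  obtain ⟨hB', hC', hBC'⟩ := mem_Edges.1 hqe
  have hSF : leafMap n F p ∈ F := leaf_mem hp
  have hnt := star_not_touch hF hp hB' hX hC' h1 h2 (leafMap n F p) (leafMap_cases p)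
  constructor
  · intro hsub
    rcases sub_cases hsub with hss | he
    · exact hnt (isol hF hB' hX hC' hSF h1 h2
        (Or.inr (Or.inr (Or.inr (Or.inr (Or.inl hss.subset))))))
    · exact hnt (Or.inr (Or.inr he))
  · intro hsub
    rcases sub_cases hsub with hss | he
    · exact hnt (isol hF hB' hX hC' hSF h1 h2 (Or.inr (Or.inl hss.subset)))
    · exact hnt (Or.inl he.symm)

lemma pin_aux (hF : ¬ ContainsN n F) {B X C B' : Finset (Fin n)} (h1 : B ⊂ X) (h2 : X ⊂ C)
    (hBB : B' ⊂ B) (hB'mem : B' = B ∨ B' = X ∨ B' = C) : False := by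
  rcases hB'mem with e | e | e
  · rw [e] at hBB; exact ssubset_irrefl _ hBB
  · rw [e] at hBB; exact ssubset_irrefl _ (h1.trans hBB)
  · rw [e] at hBB; exact ssubset_irrefl _ ((h1.trans h2).trans hBB)

lemma pin_aux2 (hF : ¬ ContainsN n F) {B X C C' : Finset (Fin n)} (h1 : B ⊂ X) (h2 : X ⊂ C)
    (hCC : C ⊂ C') (hC'mem : C' = B ∨ C' = X ∨ C' = C) : False := by
  rcases hC'mem with e | e | e
  · rw [e] at hCC; exact ssubset_irrefl _ ((hCC.trans h1).trans h2)
  · rw [e] at hCC; exact ssubset_irrefl _ (hCC.trans h2)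
  · rw [e] at hCC; exact ssubset_irrefl _ hCC

lemma chain_cmp {B X C : Finset (Fin n)} (h1 : B ⊂ X) (h2 : X ⊂ C) :
    ∀ S T : Finset (Fin n), (S = B ∨ S = X ∨ S = C) → (T = B ∨ T = X ∨ T = C) →
      S ⊆ T ∨ T ⊆ S := by
  intro S T hS hT
  rcases hS with rfl | rfl | rfl <;> rcases hT with e | e | e <;> rw [e] <;>
    first
      | exact Or.inl (subset_refl _)
      | exact Or.inl h1.subset
      | exact Or.inl h2.subset
      | exact Or.inl ((h1.trans h2).subset)
      | exact Or.inr h1.subset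
      | exact Or.inr h2.subset
      | exact Or.inr ((h1.trans h2).subset)

lemma triple_share (hF : ¬ ContainsN n F) {B X C B' X' C' : Finset (Fin n)}
    (hB : B ∈ F) (hX : X ∈ F) (hC : C ∈ F) (hB' : B' ∈ F) (hX' : X' ∈ F) (hC' : C' ∈ F)
    (h1 : B ⊂ X) (h2 : X ⊂ C) (h1' : B' ⊂ X') (h2' : X' ⊂ C')
    {W : Finset (Fin n)} (hW1 : W = B ∨ W = X ∨ W = C) (hW2 : W = B' ∨ W = X' ∨ W = C') :
    B = B' ∧ X = X' ∧ C = C' := by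
  have t1in2 : ∀ S, S ∈ F → (S = B ∨ S = X ∨ S = C) → (S = B' ∨ S = X' ∨ S = C') := by
    intro S hSF hS
    have hcmp : S ⊆ W ∨ W ⊆ S := chain_cmp h1 h2 S W hS hW1
    apply isol hF hB' hX' hC' hSF h1' h2'
    rcases hW2 with e | e | e
    · rw [← e]
      rcases hcmp with hc | hc
      · exact Or.inl hc
      · exact Or.inr (Or.inl hc)
    · rw [← e]
      rcases hcmp with hc | hc
      · exact Or.inr (Or.inr (Or.inl hc))
      · exact Or.inr (Or.inr (Or.inr (Or.inl hc)))
    · rw [← e]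
      rcases hcmp with hc | hc
      · exact Or.inr (Or.inr (Or.inr (Or.inr (Or.inl hc))))
      · exact Or.inr (Or.inr (Or.inr (Or.inr (Or.inr hc))))
  have t2in1 : ∀ S, S ∈ F → (S = B' ∨ S = X' ∨ S = C') → (S = B ∨ S = X ∨ S = C) := by
    intro S hSF hS
    have hcmp : S ⊆ W ∨ W ⊆ S := chain_cmp h1' h2' S W hS hW2
    apply isol hF hB hX hC hSF h1 h2
    rcases hW1 with e | e | e
    · rw [← e]
      rcases hcmp with hc | hc
      · exact Or.inl hc
      · exact Or.inr (Or.inl hc)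
    · rw [← e]
      rcases hcmp with hc | hc
      · exact Or.inr (Or.inr (Or.inl hc))
      · exact Or.inr (Or.inr (Or.inr (Or.inl hc)))
    · rw [← e]
      rcases hcmp with hc | hc
      · exact Or.inr (Or.inr (Or.inr (Or.inr (Or.inl hc))))
      · exact Or.inr (Or.inr (Or.inr (Or.inr (Or.inr hc))))
  have hBm : B = B' ∨ B = X' ∨ B = C' := t1in2 B hB (Or.inl rfl)
  have hB'm : B' = B ∨ B' = X ∨ B' = C := t2in1 B' hB' (Or.inl rfl)
  have hCm : C = B' ∨ C = X' ∨ C = C' := t1in2 C hC (Or.inr (Or.inr rfl))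
  have hC'm : C' = B ∨ C' = X ∨ C' = C := t2in1 C' hC' (Or.inr (Or.inr rfl))
  have hBB' : B = B' := by
    rcases hBm with e | e | e
    · exact e
    · exact (pin_aux hF h1 h2 (by rw [← e] at h1'; exact h1') hB'm).elim
    · exact (pin_aux hF h1 h2 (by have h3 := h1'.trans h2'; rw [← e] at h3; exact h3) hB'm).elim
  have hCC' : C = C' := by
    rcases hCm with e | e | e
    · exact (pin_aux2 hF h1 h2 (by have h3 := h1'.trans h2'; rw [← e] at h3; exact h3) hC'm).elim
    · exact (pin_aux2 hF h1 h2 (by rw [← e] at h2'; exact h2') hC'm).elim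
    · exact e
  refine ⟨hBB', ?_, hCC'⟩
  exact mid_unique hF hB hX hX' hC h1 h2 (by rw [hBB']; exact h1') (by rw [hCC']; exact h2')

lemma tri_cross (hF : ¬ ContainsN n F) :
    ∀ p ∈ Tri n F, ∀ q ∈ Tri n F, p ≠ q → ¬ p.1 ⊆ q.2 := by
  intro p hp q hq hne hsub
  obtain ⟨hpe, X, hX, h1, h2⟩ := mem_Tri.1 hp
  obtain ⟨hqe, X', hX', h1', h2'⟩ := mem_Tri.1 hq
  obtain ⟨hpB, hpC, hpss⟩ := mem_Edges.1 hpe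
  obtain ⟨hqB, hqC, hqss⟩ := mem_Edges.1 hqe
  have hmem : p.1 = q.1 ∨ p.1 = X' ∨ p.1 = q.2 := by
    rcases sub_cases hsub with hss | he
    · exact isol hF hqB hX' hqC hpB h1' h2'
        (Or.inr (Or.inr (Or.inr (Or.inr (Or.inl hss.subset)))))
    · exact Or.inr (Or.inr he)
  have hshare := triple_share hF hpB hX hpC hqB hX' hqC h1 h2 h1' h2' (Or.inl rfl) hmem
  exact hne (Prod.ext hshare.1 hshare.2.2)

variable (n F) in
noncomputable def phi (p : Finset (Fin n) × Finset (Fin n)) :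
    Finset (Fin n) × Finset (Fin n) :=
  if h : ∃ W ∈ F, p.2 ⊂ W then (p.1, h.choose)
  else if h' : ∃ W ∈ F, W ⊂ p.1 then (h'.choose, p.2)
  else p

lemma phi_mem (hF : ¬ ContainsN n F) {e : Finset (Fin n) × Finset (Fin n)}
    (he : e ∈ Etri n F) : phi n F e ∈ Tri n F := by
  obtain ⟨hpe, W₀, hW₀F, hd⟩ := mem_Etri.1 he
  obtain ⟨hB, hC, hss⟩ := mem_Edges.1 hpe
  rw [phi]
  split_ifs with h h'
  · obtain ⟨hWF, hWss⟩ := h.choose_spec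
    exact mem_Tri.2 ⟨mem_Edges.2 ⟨hB, hWF, hss.trans hWss⟩, e.2, hC, hss, hWss⟩
  · obtain ⟨hWF, hWss⟩ := h'.choose_spec
    exact mem_Tri.2 ⟨mem_Edges.2 ⟨hWF, hC, hWss.trans hss⟩, e.1, hB, hWss, hss⟩
  · rcases hd with hup | hdown | hmid
    · exact absurd ⟨W₀, hW₀F, hup⟩ h
    · exact absurd ⟨W₀, hW₀F, hdown⟩ h'
    · exact mem_Tri.2 ⟨hpe, W₀, hW₀F, hmid.1, hmid.2⟩

lemma fiber_eq (hF : ¬ ContainsN n F) {p : Finset (Fin n) × Finset (Fin n)}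
    (hp : p ∈ Tri n F) {X : Finset (Fin n)} (hX : X ∈ F) (h1 : p.1 ⊂ X) (h2 : X ⊂ p.2) :
    (Etri n F).filter (fun e => phi n F e = p) = {p, (p.1, X), (X, p.2)} := by
  obtain ⟨hpe, _⟩ := mem_Tri.1 hp
  obtain ⟨hpB, hpC, hpss⟩ := mem_Edges.1 hpe
  ext e
  simp only [Finset.mem_filter, Finset.mem_insert, Finset.mem_singleton]
  constructor
  · rintro ⟨he, hphi⟩
    obtain ⟨hee, W₀, hW₀F, hd⟩ := mem_Etri.1 he
    obtain ⟨heB, heC, hess⟩ := mem_Edges.1 hee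
    rw [phi] at hphi
    split_ifs at hphi with h h'
    · obtain ⟨hWF, hWss⟩ := h.choose_spec
      have he1 : e.1 = p.1 := (Prod.ext_iff.1 hphi).1
      have hch : h.choose = p.2 := (Prod.ext_iff.1 hphi).2
      have hm := mid_unique hF hpB hX heC hpC h1 h2
        (by rw [← he1]; exact hess) (by rw [← hch]; exact hWss)
      exact Or.inr (Or.inl (Prod.ext he1 hm.symm))
    · obtain ⟨hWF, hWss⟩ := h'.choose_spec
      have hch : h'.choose = p.1 := (Prod.ext_iff.1 hphi).1
      have he2 : e.2 = p.2 := (Prod.ext_iff.1 hphi).2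
      have hm := mid_unique hF hpB hX heB hpC h1 h2
        (by rw [← hch]; exact hWss) (by rw [← he2]; exact hess)
      exact Or.inr (Or.inr (Prod.ext hm.symm he2))
    · exact Or.inl hphi
  · rintro (rfl | rfl | rfl)
    · refine ⟨tri_sub_etri hp, ?_⟩
      rw [phi]
      split_ifs with h h'
      · obtain ⟨hWF, hWss⟩ := h.choose_spec
        exact (no4 hF hpB hX hpC hWF h1 h2 hWss).elim
      · obtain ⟨hWF, hWss⟩ := h'.choose_spec
        exact (no4 hF hWF hpB hX hpC hWss h1 h2).elim
      · rfl
    · refine ⟨mem_Etri.2 ⟨mem_Edges.2 ⟨hpB, hX, h1⟩, p.2, hpC, Or.inl h2⟩, ?_⟩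
      rw [phi]
      have hex : ∃ W ∈ F, ((p.1, X) : Finset (Fin n) × Finset (Fin n)).2 ⊂ W := ⟨p.2, hpC, h2⟩
      rw [dif_pos hex]
      obtain ⟨hWF, hWss⟩ := hex.choose_spec
      have hmem := isol hF hpB hX hpC hWF h1 h2
        (Or.inr (Or.inr (Or.inr (Or.inl hWss.subset))))
      have hch : hex.choose = p.2 := by
        rcases hmem with e | e | e
        · rw [e] at hWss; exact absurd (h1.trans hWss) (ssubset_irrefl _)
        · rw [e] at hWss; exact absurd hWss (ssubset_irrefl _)
        · exact e
      rw [hch]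
    · refine ⟨mem_Etri.2 ⟨mem_Edges.2 ⟨hX, hpC, h2⟩, p.1, hpB, Or.inr (Or.inl h1)⟩, ?_⟩
      rw [phi]
      have hnex : ¬ ∃ W ∈ F, ((X, p.2) : Finset (Fin n) × Finset (Fin n)).2 ⊂ W := by
        rintro ⟨W, hWF, hWss⟩
        exact no4 hF hpB hX hpC hWF h1 h2 hWss
      rw [dif_neg hnex]
      have hex : ∃ W ∈ F, W ⊂ ((X, p.2) : Finset (Fin n) × Finset (Fin n)).1 := ⟨p.1, hpB, h1⟩
      rw [dif_pos hex]
      obtain ⟨hWF, hWss⟩ := hex.choose_spec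
      have hmem := isol hF hpB hX hpC hWF h1 h2 (Or.inr (Or.inr (Or.inl hWss.subset)))
      have hch : hex.choose = p.1 := by
        rcases hmem with e | e | e
        · exact e
        · rw [e] at hWss; exact absurd hWss (ssubset_irrefl _)
        · rw [e] at hWss; exact absurd (h2.trans hWss) (ssubset_irrefl _)
      rw [hch]

lemma etri_card (hF : ¬ ContainsN n F) : (Etri n F).card = 3 * (Tri n F).card := by
  classical
  rw [Finset.card_eq_sum_card_fiberwise (fun e he => phi_mem hF he)]
  have hfib : ∀ p ∈ Tri n F, ((Etri n F).filter fun e => phi n F e = p).card = 3 := by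
    intro p hp
    obtain ⟨hpe, X, hX, h1, h2⟩ := mem_Tri.1 hp
    obtain ⟨hpB, hpC, hpss⟩ := mem_Edges.1 hpe
    rw [fiber_eq hF hp hX h1 h2]
    have d1 : p ≠ (p.1, X) := by
      intro hc
      exact h2.ne (congrArg Prod.snd hc).symm
    have d2 : p ≠ (X, p.2) := by
      intro hc
      exact h1.ne (congrArg Prod.fst hc)
    have d3 : ((p.1, X) : Finset (Fin n) × Finset (Fin n)) ≠ (X, p.2) := by
      intro hc
      exact h1.ne (congrArg Prod.fst hc)
    rw [Finset.card_insert_of_notMem (by simp [d1, d2]),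
      Finset.card_insert_of_notMem (by simp [d3]), Finset.card_singleton]
  rw [Finset.sum_congr rfl hfib, Finset.sum_const, smul_eq_mul, mul_comm]


section Assembly

variable {n : ℕ} {F : Finset (Finset (Fin n))}

theorem upper (hn : 3 ≤ n) (hF : ¬ ContainsN n F) :
    numTwoChains n F ≤ n.choose (n / 2) := by
  classical
  have hE : numTwoChains n F = (Edges n F).card := rfl
  set L : Finset (Finset (Fin n)) := (Estar n F).image (leafMap n F) with hL
  set A : Finset (Finset (Fin n) × Finset (Fin n)) := L.image (fun S => (S, S)) with hA
  set I : Finset (Finset (Fin n) × Finset (Fin n)) := A ∪ Tri n F with hI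
  have hdisjAT : Disjoint A (Tri n F) := by
    rw [Finset.disjoint_left]
    intro p hpA hpT
    obtain ⟨S, hS, rfl⟩ := Finset.mem_image.1 hpA
    exact ssubset_irrefl _ (mem_Edges.1 (mem_Tri.1 hpT).1).2.2
  have hAcard : A.card = (Estar n F).card := by
    rw [hA]
    rw [Finset.card_image_of_injective _
      (fun a b hab => (Prod.ext_iff.1 hab).1 : Function.Injective fun S => (S, S))]
    exact Finset.card_image_of_injOn (fun p hp q hq h => leaf_inj hF p hp q hq h)
  have hEcard : (Edges n F).card = (Estar n F).card + (Etri n F).card := by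
    have hsub : Etri n F ⊆ Edges n F := Finset.filter_subset _ _
    rw [Estar]
    exact (Finset.card_sdiff_add_card_eq_card hsub).symm
  have hsumI : (∑ p ∈ I, if p.1 = p.2 then 1 else 3)
      = (Estar n F).card + 3 * (Tri n F).card := by
    rw [hI, Finset.sum_union hdisjAT]
    have h1 : (∑ p ∈ A, if p.1 = p.2 then 1 else 3) = A.card := by
      rw [Finset.sum_congr rfl (g := fun _ => 1) ?_, Finset.sum_const, smul_eq_mul, mul_one]
      intro p hp
      obtain ⟨S, hS, rfl⟩ := Finset.mem_image.1 hp
      simp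
    have h2 : (∑ p ∈ Tri n F, if p.1 = p.2 then 1 else 3) = 3 * (Tri n F).card := by
      rw [Finset.sum_congr rfl (g := fun _ => 3) ?_, Finset.sum_const, smul_eq_mul, mul_comm]
      intro p hp
      exact if_neg (mem_Edges.1 (mem_Tri.1 hp).1).2.2.ne
    rw [h1, h2, hAcard]
  have hleafpre : ∀ p ∈ A, ∃ e ∈ Estar n F, leafMap n F e = p.1 ∧ p.1 = p.2 := by
    intro p hp
    obtain ⟨S, hS, rfl⟩ := Finset.mem_image.1 hp
    obtain ⟨e, he, rfl⟩ := Finset.mem_image.1 hS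
    exact ⟨e, he, rfl, rfl⟩
  have hcross : ∀ p ∈ I, ∀ q ∈ I, p ≠ q → ¬ p.1 ⊆ q.2 := by
    intro p hp q hq hne
    rcases Finset.mem_union.1 hp with hpA | hpT <;> rcases Finset.mem_union.1 hq with hqA | hqT
    · obtain ⟨e1, he1, hl1, heq1⟩ := hleafpre p hpA
      obtain ⟨e2, he2, hl2, heq2⟩ := hleafpre q hqA
      intro hsub
      rw [← heq2] at hsub
      rw [← hl1, ← hl2] at hsub
      have := leaf_antichain hF e1 he1 e2 he2 hsub
      rw [hl1, hl2] at this
      obtain ⟨S1, hS1, rfl⟩ := Finset.mem_image.1 hpA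
      obtain ⟨S2, hS2, rfl⟩ := Finset.mem_image.1 hqA
      exact hne (by simp_all)
    · obtain ⟨e1, he1, hl1, heq1⟩ := hleafpre p hpA
      rw [← hl1]
      exact (leaf_vs_tri hF he1 hqT).1
    · obtain ⟨e2, he2, hl2, heq2⟩ := hleafpre q hqA
      rw [← heq2, ← hl2]
      exact (leaf_vs_tri hF he2 hpT).2
    · exact tri_cross hF p hpT q hqT hne
  have hsub : ∀ p ∈ I, p.1 ⊆ p.2 := by
    intro p hp
    rcases Finset.mem_union.1 hp with hpA | hpT
    · obtain ⟨e, he, hl, heq⟩ := hleafpre p hpA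
      rw [heq]
    · exact (mem_Edges.1 (mem_Tri.1 hpT).1).2.2.subset
  have hgap : ∀ p ∈ I, p.1 = p.2 ∨ p.1.card + 2 ≤ p.2.card := by
    intro p hp
    rcases Finset.mem_union.1 hp with hpA | hpT
    · obtain ⟨e, he, hl, heq⟩ := hleafpre p hpA
      exact Or.inl heq
    · obtain ⟨hpe, X, hX, h1, h2⟩ := mem_Tri.1 hpT
      right
      have c1 := Finset.card_lt_card h1
      have c2 := Finset.card_lt_card h2
      omega
  have hpc := pair_count hn I hsub hgap hcross
  rw [hsumI] at hpc
  rw [hE, hEcard, etri_card hF]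
  exact hpc

theorem lower (hn : 3 ≤ n) :
    ¬ ContainsN n (insert ∅ (Finset.powersetCard (n / 2) (Finset.univ : Finset (Fin n)))) ∧
      numTwoChains n (insert ∅ (Finset.powersetCard (n / 2) (Finset.univ : Finset (Fin n))))
        = n.choose (n / 2) := by
  classical
  set M : Finset (Finset (Fin n)) := Finset.powersetCard (n / 2) (Finset.univ : Finset (Fin n))
    with hM
  constructor
  · rintro ⟨A, hA, B, hB, C, hC, D, hD, nAB, nAC, nAD, nBC, nBD, nCD, hAC, hBC, hBD⟩
    have key : ∀ P Q : Finset (Fin n), P ∈ insert ∅ M → Q ∈ insert ∅ M → P ⊂ Q → P = ∅ := by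
      intro P Q hP hQ hPQ
      rcases Finset.mem_insert.1 hP with rfl | hPM
      · rfl
      exfalso
      rcases Finset.mem_insert.1 hQ with rfl | hQM
      · exact Finset.not_ssubset_empty _ hPQ
      · have h1 : P.card = n / 2 := (Finset.mem_powersetCard.1 hPM).2
        have h2 : Q.card = n / 2 := (Finset.mem_powersetCard.1 hQM).2
        have := Finset.card_lt_card hPQ
        omega
    exact nAB ((key A C hA hC hAC).trans (key B C hB hC hBC).symm)
  · have hcount : ((insert ∅ M ×ˢ insert ∅ M).filter fun p => p.1 ⊂ p.2)
        = {(∅ : Finset (Fin n))} ×ˢ M := by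
      ext p
      simp only [Finset.mem_filter, Finset.mem_product, Finset.mem_insert,
        Finset.mem_singleton]
      constructor
      · rintro ⟨⟨hp1, hp2⟩, hss⟩
        have hp2M : p.2 ∈ M := by
          rcases hp2 with h2 | h2
          · rw [h2] at hss
            exact absurd hss (Finset.not_ssubset_empty _)
          · exact h2
        refine ⟨?_, hp2M⟩
        rcases hp1 with h1 | h1
        · exact h1
        · exfalso
          have c1 : p.1.card = n / 2 := (Finset.mem_powersetCard.1 h1).2
          have c2 : p.2.card = n / 2 := (Finset.mem_powersetCard.1 hp2M).2
          have := Finset.card_lt_card hss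
          omega
      · rintro ⟨h1, h2⟩
        refine ⟨⟨Or.inl h1, Or.inr h2⟩, ?_⟩
        rw [h1]
        rw [Finset.ssubset_iff_subset_ne]
        refine ⟨Finset.empty_subset _, ?_⟩
        intro hc
        have c2 : p.2.card = n / 2 := (Finset.mem_powersetCard.1 h2).2
        rw [← hc] at c2
        simp at c2
        omega
    rw [numTwoChains, hcount, Finset.card_product, Finset.card_singleton, one_mul, hM,
      Finset.card_powersetCard, Finset.card_univ, Fintype.card_fin]

end Assembly

end LaN

theorem La_N_P2 (n : ℕ) (hn : 3 ≤ n) :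
    IsGreatest {m | ∃ F : Finset (Finset (Fin n)), ¬ ContainsN n F ∧ numTwoChains n F = m}
      (Nat.choose n (n / 2)) := by
  constructor
  · obtain ⟨h1, h2⟩ := LaN.lower hn
    exact ⟨_, h1, h2⟩
  · rintro m ⟨F, hF, rfl⟩
    exact LaN.upper hn hF
end

section
/- For n ≥ 5, the union of the two middle levels B = {F ⊆ [n] : |F| = ⌊n/2⌋ or |F| = ⌊n/2⌋ + 1} is butterfly-free and contains exactly ⌈n/2⌉ · C(n, ⌊n/2⌋) pairs (F, F') with F ⊊ F'. -/
/-- `F` contains a (weak) copy of the butterfly poset `K_{2,2}`. -/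
def ContainsButterfly (n : ℕ) (F : Finset (Finset (Fin n))) : Prop :=
  ∃ A ∈ F, ∃ B ∈ F, ∃ C ∈ F, ∃ D ∈ F,
    A ≠ B ∧ A ≠ C ∧ A ≠ D ∧ B ≠ C ∧ B ≠ D ∧ C ≠ D ∧
    A ⊂ C ∧ A ⊂ D ∧ B ⊂ C ∧ B ⊂ D

theorem middle_two_levels_butterfly_free (n : ℕ) (hn : 5 ≤ n) :
    ¬ ContainsButterfly n
        (Finset.univ.filter fun S : Finset (Fin n) => S.card = n / 2 ∨ S.card = n / 2 + 1) ∧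
      numTwoChains n
        (Finset.univ.filter fun S : Finset (Fin n) => S.card = n / 2 ∨ S.card = n / 2 + 1) =
        (n + 1) / 2 * Nat.choose n (n / 2) := by
  set k := n / 2 with hk
  constructor
  · rintro ⟨A, hA, B, hB, C, hC, D, hD, hAB, hAC, hAD, hBC, hBD, hCD,
      hACs, hADs, hBCs, hBDs⟩
    simp only [Finset.mem_filter, Finset.mem_univ, true_and] at hA hB hC hD
    have h1 : A.card < C.card := Finset.card_lt_card hACs
    have h2 : A.card < D.card := Finset.card_lt_card hADs
    have h3 : B.card < C.card := Finset.card_lt_card hBCs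
    have hAk : A.card = k := by omega
    have hBk : B.card = k := by omega
    have hCk : C.card = k + 1 := by omega
    have hDk : D.card = k + 1 := by omega
    have hCU : C ⊂ C ∪ D := by
      refine Finset.ssubset_iff_subset_ne.mpr ⟨Finset.subset_union_left, fun h => ?_⟩
      have : D ⊆ C := by rw [h]; exact Finset.subset_union_right
      exact hCD (Finset.eq_of_subset_of_card_le this (by omega)).symm
    have hU : k + 2 ≤ (C ∪ D).card := by
      have := Finset.card_lt_card hCU; omega
    have hI : (C ∩ D).card ≤ k := by
      have := Finset.card_union_add_card_inter C D; omega
    have hAI : A ⊆ C ∩ D := Finset.subset_inter hACs.subset hADs.subset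
    have hBI : B ⊆ C ∩ D := Finset.subset_inter hBCs.subset hBDs.subset
    have hA' : A = C ∩ D := Finset.eq_of_subset_of_card_le hAI (by omega)
    have hB' : B = C ∩ D := Finset.eq_of_subset_of_card_le hBI (by omega)
    exact hAB (hA'.trans hB'.symm)
  · unfold numTwoChains
    have hkn : k < n := by omega
    have key : (((Finset.univ.filter fun S : Finset (Fin n) =>
          S.card = k ∨ S.card = k + 1) ×ˢ
          (Finset.univ.filter fun S : Finset (Fin n) =>
          S.card = k ∨ S.card = k + 1)).filter fun p => p.1 ⊂ p.2)
        = (((Finset.univ : Finset (Fin n)).powersetCard k ×ˢ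
            (Finset.univ : Finset (Fin n)).powersetCard (k+1)).filter
            fun p => p.1 ⊂ p.2) := by
      ext ⟨a, b⟩
      simp only [Finset.mem_filter, Finset.mem_product, Finset.mem_univ, true_and,
        Finset.mem_powersetCard, Finset.subset_univ]
      constructor
      · rintro ⟨⟨ha, hb⟩, hab⟩
        have := Finset.card_lt_card hab
        exact ⟨⟨by omega, by omega⟩, hab⟩
      · rintro ⟨⟨ha, hb⟩, hab⟩
        exact ⟨⟨Or.inl ha, Or.inr hb⟩, hab⟩
    rw [key]
    have hsum : ((((Finset.univ : Finset (Fin n)).powersetCard k ×ˢ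
            (Finset.univ : Finset (Fin n)).powersetCard (k+1)).filter
            fun p => p.1 ⊂ p.2)).card
        = ∑ a ∈ (Finset.univ : Finset (Fin n)).powersetCard k,
            (((Finset.univ : Finset (Fin n)).powersetCard (k+1)).filter
              fun b => a ⊂ b).card := by
      rw [Finset.card_filter, Finset.sum_product]
      exact Finset.sum_congr rfl fun a _ => (Finset.card_filter _ _).symm
    rw [hsum]
    have hcount : ∀ a ∈ (Finset.univ : Finset (Fin n)).powersetCard k,
        (((Finset.univ : Finset (Fin n)).powersetCard (k+1)).filter
          fun b => a ⊂ b).card = n - k := by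
      intro a ha
      rw [Finset.mem_powersetCard] at ha
      obtain ⟨-, hac⟩ := ha
      have himg : (((Finset.univ : Finset (Fin n)).powersetCard (k+1)).filter
          fun b => a ⊂ b) = aᶜ.image (fun x => insert x a) := by
        ext b
        simp only [Finset.mem_filter, Finset.mem_powersetCard, Finset.subset_univ,
          true_and, Finset.mem_image, Finset.mem_compl]
        constructor
        · rintro ⟨hb, hab⟩
          obtain ⟨x, hx, hxb⟩ := Finset.ssubset_iff.mp hab
          refine ⟨x, hx, Finset.eq_of_subset_of_card_le hxb ?_⟩
          rw [Finset.card_insert_of_notMem hx]; omega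
        · rintro ⟨x, hx, rfl⟩
          refine ⟨by rw [Finset.card_insert_of_notMem hx, hac],
            Finset.ssubset_insert hx⟩
      rw [himg, Finset.card_image_of_injOn, Finset.card_compl, hac,
        Fintype.card_fin]
      intro x hx y hy hxy
      simp only [Finset.mem_coe, Finset.mem_compl] at hx hy
      have hxy' : insert x a = insert y a := hxy
      have : x ∈ insert y a := hxy' ▸ Finset.mem_insert_self x a
      rcases Finset.mem_insert.mp this with h | h
      · exact h
      · exact absurd h hx
    rw [Finset.sum_congr rfl hcount, Finset.sum_const, smul_eq_mul,
      Finset.card_powersetCard, Finset.card_univ, Fintype.card_fin]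
    have : n - k = (n + 1) / 2 := by omega
    rw [this, Nat.mul_comm]
end

section
/- If F ⊆ 2^[n] is butterfly-free and F₂ denotes the set of members of F that are neither inclusion-minimal nor inclusion-maximal in F, then F₂ is an antichain, and moreover each Y ∈ F₂ has exactly one proper subset and exactly one proper superset in F. -/
/-- The members of `F` that are neither inclusion-minimal nor inclusion-maximal in `F`. -/
def middlePart (n : ℕ) (F : Finset (Finset (Fin n))) : Finset (Finset (Fin n)) :=
  F.filter fun Y => (∃ X ∈ F, X ⊂ Y) ∧ (∃ Z ∈ F, Y ⊂ Z)

theorem middle_part_antichain (n : ℕ) (F : Finset (Finset (Fin n)))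
    (hF : ¬ ContainsButterfly n F) :
    (∀ Y ∈ middlePart n F, ∀ Y' ∈ middlePart n F, Y ≠ Y' → ¬ Y ⊆ Y') ∧
    (∀ Y ∈ middlePart n F,
      (F.filter fun X => X ⊂ Y).card = 1 ∧ (F.filter fun Z => Y ⊂ Z).card = 1) := by
  constructor
  · intro Y hY Y' hY' hne hsub
    simp only [middlePart, Finset.mem_filter] at hY hY'
    obtain ⟨hYF, ⟨X, hXF, hXY⟩, -⟩ := hY
    obtain ⟨hY'F, -, Z, hZF, hY'Z⟩ := hY'
    have hYY' : Y ⊂ Y' := hsub.ssubset_of_ne hne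
    exact hF ⟨X, hXF, Y, hYF, Y', hY'F, Z, hZF,
      hXY.ne, (hXY.trans hYY').ne, (hXY.trans (hYY'.trans hY'Z)).ne,
      hYY'.ne, (hYY'.trans hY'Z).ne, hY'Z.ne,
      hXY.trans hYY', hXY.trans (hYY'.trans hY'Z), hYY', hYY'.trans hY'Z⟩
  · intro Y hY
    simp only [middlePart, Finset.mem_filter] at hY
    obtain ⟨hYF, ⟨X, hXF, hXY⟩, Z, hZF, hYZ⟩ := hY
    constructor
    · rw [Finset.card_eq_one]
      refine ⟨X, Finset.eq_singleton_iff_unique_mem.mpr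
        ⟨Finset.mem_filter.mpr ⟨hXF, hXY⟩, ?_⟩⟩
      intro X' hX'
      obtain ⟨hX'F, hX'Y⟩ := Finset.mem_filter.mp hX'
      by_contra hne
      exact hF ⟨X', hX'F, X, hXF, Y, hYF, Z, hZF,
        hne, hX'Y.ne, (hX'Y.trans hYZ).ne, hXY.ne, (hXY.trans hYZ).ne, hYZ.ne,
        hX'Y, hX'Y.trans hYZ, hXY, hXY.trans hYZ⟩
    · rw [Finset.card_eq_one]
      refine ⟨Z, Finset.eq_singleton_iff_unique_mem.mpr
        ⟨Finset.mem_filter.mpr ⟨hZF, hYZ⟩, ?_⟩⟩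
      intro Z' hZ'
      obtain ⟨hZ'F, hYZ'⟩ := Finset.mem_filter.mp hZ'
      by_contra hne
      exact hF ⟨X, hXF, Y, hYF, Z', hZ'F, Z, hZF,
        hXY.ne, (hXY.trans hYZ').ne, (hXY.trans hYZ).ne, hYZ'.ne, hYZ.ne, hne,
        hXY.trans hYZ', hXY.trans hYZ, hYZ', hYZ⟩
end

section
/- If G is the comparability graph of a family F ⊆ 2^[n] that contains no copy of the N poset, then every connected component of G is either a triangle (corresponding to a 3-chain A ⊂ B ⊂ C with no other member of F comparable to any of them) or a star (a single set together with an antichain of its supersets, or a single set together with an antichain of its subsets). -/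
/-- The comparability graph of a family `F ⊆ 2^[n]`: vertices are the members
of `F`, two of them adjacent iff one strictly contains the other. -/
def compGraph (n : ℕ) (F : Finset (Finset (Fin n))) : SimpleGraph {A // A ∈ F} :=
  SimpleGraph.fromRel fun A B => A.1 ⊂ B.1

section Aux

variable {n : ℕ} {F : Finset (Finset (Fin n))}

lemma NF.adj_iff {a b : {A // A ∈ F}} :
    (compGraph n F).Adj a b ↔ a ≠ b ∧ (a.1 ⊂ b.1 ∨ b.1 ⊂ a.1) := by
  simp [compGraph, SimpleGraph.fromRel_adj]

lemma NF.vne {a b : {A // A ∈ F}} (h : a ≠ b) : a.1 ≠ b.1 :=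
  fun he => h (Subtype.ext he)

lemma NF.sne {a b : {A // A ∈ F}} (h : a.1 ≠ b.1) : a ≠ b :=
  fun he => h (congrArg Subtype.val he)

lemma NF.adj_of_ss {a b : {A // A ∈ F}} (h : a.1 ⊂ b.1) : (compGraph n F).Adj a b :=
  NF.adj_iff.mpr ⟨NF.sne h.ne, Or.inl h⟩

lemma NF.reach_closed {V} {G : SimpleGraph V} {S : Set V}
    (hS : ∀ x ∈ S, ∀ y, G.Adj x y → y ∈ S) {u w : V} (h : G.Reachable u w)
    (hu : u ∈ S) : w ∈ S := by
  obtain ⟨p⟩ := h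
  induction p with
  | nil => exact hu
  | cons h p ih => exact ih (hS _ hu _ h)

lemma NF.mkN {A B C D : Finset (Fin n)}
    (hA : A ∈ F) (hB : B ∈ F) (hC : C ∈ F) (hD : D ∈ F)
    (hAB : A ≠ B) (hAD : A ≠ D) (hCD : C ≠ D)
    (h1 : A ⊂ C) (h2 : B ⊂ C) (h3 : B ⊂ D) : ContainsN n F :=
  ⟨A, hA, B, hB, C, hC, D, hD, hAB, h1.ne, hAD, h2.ne, h3.ne, hCD, h1, h2, h3⟩

/-- Nothing outside a 3-chain is adjacent to any element of the 3-chain. -/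
lemma NF.chain_absorb (hF : ¬ ContainsN n F)
    {A B C D : {A // A ∈ F}} (hAB : A.1 ⊂ B.1) (hBC : B.1 ⊂ C.1)
    (hDA : D ≠ A) (hDB : D ≠ B) (hDC : D ≠ C)
    (hadj : (compGraph n F).Adj D A ∨ (compGraph n F).Adj D B ∨ (compGraph n F).Adj D C) :
    False := by
  have hAC : A.1 ⊂ C.1 := hAB.trans hBC
  rcases hadj with h | h | h
  · rcases (NF.adj_iff.mp h).2 with h' | h'
    · -- D ⊂ A
      exact hF (NF.mkN A.2 D.2 C.2 B.2 (NF.vne hDA).symm hAB.ne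
        hBC.ne' hAC (h'.trans hAC) (h'.trans hAB))
    · -- A ⊂ D
      exact hF (NF.mkN B.2 A.2 C.2 D.2 hAB.ne' (NF.vne hDB).symm
        (NF.vne hDC).symm hBC hAC h')
  · rcases (NF.adj_iff.mp h).2 with h' | h'
    · -- D ⊂ B
      exact hF (NF.mkN A.2 D.2 C.2 B.2 (NF.vne hDA).symm hAB.ne
        hBC.ne' hAC (h'.trans hBC) h')
    · -- B ⊂ D
      exact hF (NF.mkN A.2 B.2 C.2 D.2 hAB.ne (NF.vne hDA).symm
        (NF.vne hDC).symm hAC hBC h')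
  · rcases (NF.adj_iff.mp h).2 with h' | h'
    · -- D ⊂ C
      exact hF (NF.mkN D.2 A.2 C.2 B.2 (NF.vne hDA) (NF.vne hDB)
        hBC.ne' h' hAC hAB)
    · -- C ⊂ D
      exact hF (NF.mkN A.2 B.2 C.2 D.2 hAB.ne (NF.vne hDA).symm
        (NF.vne hDC).symm hAC hBC (hBC.trans h'))

/-- The star cases, given an edge `a ⊂ b` in the component of `v` and no 3-chain. -/
lemma NF.star_main (hF : ¬ ContainsN n F) {v a b : {A // A ∈ F}}
    (hn3 : ∀ x y z : {A // A ∈ F}, (compGraph n F).Reachable v x →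
      x.1 ⊂ y.1 → y.1 ⊂ z.1 → False)
    (hv : v = a ∨ v = b) (hab : a.1 ⊂ b.1) :
    (∃ A B C : {A // A ∈ F}, A.1 ⊂ B.1 ∧ B.1 ⊂ C.1 ∧
      {w | (compGraph n F).Reachable v w} = {A, B, C}) ∨
    (∃ c : {A // A ∈ F}, (compGraph n F).Reachable v c ∧
      {w | (compGraph n F).Reachable v w} ⊆ {w | w = c ∨ c.1 ⊂ w.1} ∧
      ∀ w w' : {A // A ∈ F}, (compGraph n F).Reachable v w →
        (compGraph n F).Reachable v w' → w ≠ c → w' ≠ c → w ≠ w' → ¬ w.1 ⊆ w'.1) ∨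
    (∃ c : {A // A ∈ F}, (compGraph n F).Reachable v c ∧
      {w | (compGraph n F).Reachable v w} ⊆ {w | w = c ∨ w.1 ⊂ c.1} ∧
      ∀ w w' : {A // A ∈ F}, (compGraph n F).Reachable v w →
        (compGraph n F).Reachable v w' → w ≠ c → w' ≠ c → w ≠ w' → ¬ w.1 ⊆ w'.1) := by
  classical
  set G := compGraph n F with hGdef
  have hadjab : G.Adj a b := NF.adj_of_ss hab
  have hra : G.Reachable v a := by
    rcases hv with rfl | rfl
    · exact SimpleGraph.Reachable.refl _
    · exact hadjab.symm.reachable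
  have hrb : G.Reachable v b := hra.trans hadjab.reachable
  by_cases hb2 : ∃ y, y ≠ a ∧ y ≠ b ∧ G.Adj b y
  · -- star with center b, leaves are subsets of b
    obtain ⟨y, hya, hyb, hyadj⟩ := hb2
    have hyss : y.1 ⊂ b.1 := by
      rcases (NF.adj_iff.mp hyadj).2 with h' | h'
      · exact (hn3 _ _ _ hra hab h').elim
      · exact h'
    have hSclosed : ∀ x ∈ {w : {A // A ∈ F} | G.Reachable v w ∧ (w = b ∨ w.1 ⊂ b.1)},
        ∀ z, G.Adj x z → z ∈ {w : {A // A ∈ F} | G.Reachable v w ∧ (w = b ∨ w.1 ⊂ b.1)} := by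
      rintro x ⟨hxr, hx⟩ z hadj
      have hzr : G.Reachable v z := hxr.trans hadj.reachable
      refine ⟨hzr, ?_⟩
      rcases hx with rfl | hx
      · rcases (NF.adj_iff.mp hadj).2 with h' | h'
        · exact (hn3 _ _ _ hra hab h').elim
        · exact Or.inr h'
      · rcases (NF.adj_iff.mp hadj).2 with h' | h'
        · -- x ⊂ z
          by_cases hzb : z = b
          · exact Or.inl hzb
          by_cases hzssb : z.1 ⊂ b.1
          · exact Or.inr hzssb
          exfalso
          have key : ∀ w' : {A // A ∈ F}, w'.1 ⊂ b.1 → w' ≠ x → False := by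
            intro w' hw'b hw'x
            by_cases hw'z : w'.1 = z.1
            · exact hzssb (by rw [← hw'z]; exact hw'b)
            · exact hF (NF.mkN w'.2 x.2 b.2 z.2 (NF.vne hw'x) hw'z
                (fun h => hzb (Subtype.ext h.symm)) hw'b hx h')
          by_cases hxy : x = y
          · exact key a hab (fun h => hya (hxy ▸ h.symm))
          · exact key y hyss (fun h => hxy h.symm)
        · -- z ⊂ x ⊂ b : 3-chain
          exact (hn3 _ _ _ hzr h' hx).elim
    have hSmem : ∀ w, G.Reachable v w →
        w ∈ {w : {A // A ∈ F} | G.Reachable v w ∧ (w = b ∨ w.1 ⊂ b.1)} := by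
      intro w hw
      refine NF.reach_closed hSclosed hw ?_
      exact ⟨SimpleGraph.Reachable.refl _, by
        rcases hv with rfl | rfl
        · exact Or.inr hab
        · exact Or.inl rfl⟩
    refine Or.inr (Or.inr ⟨b, hrb, ?_, ?_⟩)
    · intro w hw; exact (hSmem w hw).2
    · intro w w' hwr hw'r hwb hw'b hww' hsub
      have h1 : w'.1 ⊂ b.1 := ((hSmem w' hw'r).2).resolve_left hw'b
      have h2 : w.1 ⊂ w'.1 := lt_of_le_of_ne hsub (NF.vne hww')
      exact hn3 _ _ _ hwr h2 h1
  · by_cases ha2 : ∃ y, y ≠ a ∧ y ≠ b ∧ G.Adj a y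
    · -- star with center a, leaves are supersets of a
      obtain ⟨y, hya, hyb, hyadj⟩ := ha2
      have hyss : a.1 ⊂ y.1 := by
        rcases (NF.adj_iff.mp hyadj).2 with h' | h'
        · exact h'
        · exact (hn3 _ _ _ (hra.trans hyadj.reachable) h' hab).elim
      have hSclosed : ∀ x ∈ {w : {A // A ∈ F} | G.Reachable v w ∧ (w = a ∨ a.1 ⊂ w.1)},
          ∀ z, G.Adj x z → z ∈ {w : {A // A ∈ F} | G.Reachable v w ∧ (w = a ∨ a.1 ⊂ w.1)} := by
        rintro x ⟨hxr, hx⟩ z hadj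
        have hzr : G.Reachable v z := hxr.trans hadj.reachable
        refine ⟨hzr, ?_⟩
        rcases hx with rfl | hx
        · rcases (NF.adj_iff.mp hadj).2 with h' | h'
          · exact Or.inr h'
          · exact (hn3 _ _ _ hzr h' hab).elim
        · rcases (NF.adj_iff.mp hadj).2 with h' | h'
          · exact (hn3 _ _ _ hra hx h').elim
          · -- z ⊂ x
            by_cases hza : z = a
            · exact Or.inl hza
            by_cases hzssa : a.1 ⊂ z.1
            · exact Or.inr hzssa
            exfalso
            have key : ∀ w' : {A // A ∈ F}, a.1 ⊂ w'.1 → w' ≠ x → False := by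
              intro w' hw'a hw'x
              by_cases hw'z : z.1 = w'.1
              · exact hzssa (by rw [hw'z]; exact hw'a)
              · exact hF (NF.mkN z.2 a.2 x.2 w'.2
                  (fun h => hza (Subtype.ext h)) hw'z (NF.vne hw'x).symm h' hx hw'a)
            by_cases hxy : x = y
            · exact key b hab (fun h => hyb (hxy ▸ h.symm))
            · exact key y hyss (fun h => hxy h.symm)
      have hSmem : ∀ w, G.Reachable v w →
          w ∈ {w : {A // A ∈ F} | G.Reachable v w ∧ (w = a ∨ a.1 ⊂ w.1)} := by
        intro w hw
        refine NF.reach_closed hSclosed hw ?_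
        exact ⟨SimpleGraph.Reachable.refl _, by
          rcases hv with rfl | rfl
          · exact Or.inl rfl
          · exact Or.inr hab⟩
      refine Or.inr (Or.inl ⟨a, hra, ?_, ?_⟩)
      · intro w hw; exact (hSmem w hw).2
      · intro w w' hwr hw'r hwa hw'a hww' hsub
        have h1 : a.1 ⊂ w.1 := ((hSmem w hwr).2).resolve_left hwa
        have h2 : w.1 ⊂ w'.1 := lt_of_le_of_ne hsub (NF.vne hww')
        exact hn3 _ _ _ hra h1 h2
    · -- component is exactly the edge {a, b}
      have hSclosed : ∀ x ∈ {w : {A // A ∈ F} | w = a ∨ w = b},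
          ∀ z, G.Adj x z → z ∈ {w : {A // A ∈ F} | w = a ∨ w = b} := by
        rintro x (rfl | rfl) z hadj
        · by_contra hz
          simp only [Set.mem_setOf_eq, not_or] at hz
          exact ha2 ⟨z, hz.1, hz.2, hadj⟩
        · by_contra hz
          simp only [Set.mem_setOf_eq, not_or] at hz
          exact hb2 ⟨z, hz.1, hz.2, hadj⟩
      have hSmem : ∀ w, G.Reachable v w → w = a ∨ w = b := by
        intro w hw
        exact NF.reach_closed hSclosed hw
          (by rcases hv with rfl | rfl; exacts [Or.inl rfl, Or.inr rfl])
      refine Or.inr (Or.inr ⟨b, hrb, ?_, ?_⟩)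
      · intro w hw
        rcases hSmem w hw with rfl | rfl
        · exact Or.inr hab
        · exact Or.inl rfl
      · intro w w' hwr hw'r hwb hw'b hww' hsub
        rcases hSmem w hwr with rfl | rfl
        · rcases hSmem w' hw'r with rfl | rfl
          · exact hww' rfl
          · exact hw'b rfl
        · exact hwb rfl

end Aux


theorem N_free_components (n : ℕ) (F : Finset (Finset (Fin n)))
    (hF : ¬ ContainsN n F) (v : {A // A ∈ F}) :
    -- the component of `v` is a triangle coming from a 3-chain, …
    (∃ A B C : {A // A ∈ F}, A.1 ⊂ B.1 ∧ B.1 ⊂ C.1 ∧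
      {w | (compGraph n F).Reachable v w} = {A, B, C}) ∨
    -- … or a star: a set `c` together with an antichain of its supersets, …
    (∃ c : {A // A ∈ F}, (compGraph n F).Reachable v c ∧
      {w | (compGraph n F).Reachable v w} ⊆ {w | w = c ∨ c.1 ⊂ w.1} ∧
      ∀ w w' : {A // A ∈ F}, (compGraph n F).Reachable v w →
        (compGraph n F).Reachable v w' → w ≠ c → w' ≠ c → w ≠ w' → ¬ w.1 ⊆ w'.1) ∨
    -- … or a star: a set `c` together with an antichain of its subsets.
    (∃ c : {A // A ∈ F}, (compGraph n F).Reachable v c ∧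
      {w | (compGraph n F).Reachable v w} ⊆ {w | w = c ∨ w.1 ⊂ c.1} ∧
      ∀ w w' : {A // A ∈ F}, (compGraph n F).Reachable v w →
        (compGraph n F).Reachable v w' → w ≠ c → w' ≠ c → w ≠ w' → ¬ w.1 ⊆ w'.1) := by
  classical
  set G := compGraph n F with hGdef
  by_cases h3 : ∃ A B C : {A // A ∈ F}, G.Reachable v A ∧ A.1 ⊂ B.1 ∧ B.1 ⊂ C.1
  · -- triangle case
    obtain ⟨A, B, C, hrA, hAB, hBC⟩ := h3
    have hrB : G.Reachable v B := hrA.trans (NF.adj_of_ss hAB).reachable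
    have hrC : G.Reachable v C := hrB.trans (NF.adj_of_ss hBC).reachable
    refine Or.inl ⟨A, B, C, hAB, hBC, ?_⟩
    apply Set.Subset.antisymm
    · intro w hw
      have hAw : G.Reachable A w := hrA.symm.trans hw
      have : w ∈ {w : {A // A ∈ F} | w = A ∨ w = B ∨ w = C} := by
        refine NF.reach_closed ?_ hAw (Or.inl rfl)
        rintro x hx z hadj
        by_contra hz
        simp only [Set.mem_setOf_eq, not_or] at hz
        refine NF.chain_absorb hF hAB hBC hz.1 hz.2.1 hz.2.2 ?_
        rcases hx with rfl | rfl | rfl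
        · exact Or.inl hadj.symm
        · exact Or.inr (Or.inl hadj.symm)
        · exact Or.inr (Or.inr hadj.symm)
      simpa using this
    · intro w hw
      simp only [Set.mem_insert_iff, Set.mem_singleton_iff] at hw
      rcases hw with rfl | rfl | rfl
      exacts [hrA, hrB, hrC]
  · -- no 3-chain in the component
    have hn3 : ∀ x y z : {A // A ∈ F}, G.Reachable v x → x.1 ⊂ y.1 → y.1 ⊂ z.1 → False :=
      fun x y z hx h1 h2 => h3 ⟨x, y, z, hx, h1, h2⟩
    by_cases hnb : ∃ u, G.Adj v u
    · obtain ⟨u, hu⟩ := hnb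
      rcases (NF.adj_iff.mp hu).2 with h' | h'
      · exact NF.star_main hF hn3 (Or.inl rfl) h'
      · exact NF.star_main hF hn3 (Or.inr rfl) h'
    · -- isolated vertex
      push_neg at hnb
      have hSmem : ∀ w, G.Reachable v w → w = v := by
        intro w hw
        exact NF.reach_closed (S := {w | w = v})
          (by rintro x rfl z hadj; exact absurd hadj (hnb z)) hw rfl
      refine Or.inr (Or.inl ⟨v, SimpleGraph.Reachable.refl _, ?_, ?_⟩)
      · intro w hw; exact Or.inl (hSmem w hw)
      · intro w w' hwr hw'r hwv hw'v hww' hsub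
        exact hwv (hSmem w hwr)
end

section
/- For n ≥ 2, the family consisting of ∅, all ⌊n/2⌋-element subsets of [n], and [n] itself contains no copy of the W poset and no copy of the M poset, and contains exactly 2·C(n, ⌊n/2⌋) + 1 pairs in strict containment. -/
section Aux
variable {n : ℕ} (hn : 2 ≤ n)

lemma memF_iff {x : Finset (Fin n)} :
    x ∈ (insert ∅ (insert Finset.univ (Finset.univ.powersetCard (n / 2)))) ↔
      x = ∅ ∨ x = Finset.univ ∨ x.card = n / 2 := by
  simp [Finset.mem_powersetCard_univ]

include hn in
lemma myhalf_pos : 0 < n / 2 := Nat.div_pos hn (by norm_num)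

include hn in
lemma myhalf_lt : n / 2 < n := Nat.div_lt_self (by omega) (by norm_num)

omit hn in
lemma above_univ {x y : Finset (Fin n)}
    (hx : x = ∅ ∨ x = Finset.univ ∨ x.card = n / 2)
    (hy : y = ∅ ∨ y = Finset.univ ∨ y.card = n / 2)
    (hxy : x ⊂ y) (hne : x ≠ ∅) : y = Finset.univ := by
  have hxu : x ≠ Finset.univ := by
    rintro rfl
    exact hxy.2 (Finset.subset_univ y)
  have hxc : x.card = n / 2 := by tauto
  have hc := Finset.card_lt_card hxy
  rcases hy with rfl | rfl | hyc
  · exact absurd hxy (by simp)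
  · rfl
  · omega

include hn in
lemma below_empty {x y : Finset (Fin n)}
    (hx : x = ∅ ∨ x = Finset.univ ∨ x.card = n / 2)
    (hy : y = ∅ ∨ y = Finset.univ ∨ y.card = n / 2)
    (hxy : x ⊂ y) (hne : y ≠ Finset.univ) : x = ∅ := by
  have hyc : y.card = n / 2 := by
    rcases hy with rfl | rfl | h
    · exact absurd hxy (by simp)
    · exact absurd rfl hne
    · exact h
  have hc := Finset.card_lt_card hxy
  rcases hx with rfl | rfl | hxc
  · rfl
  · have hcu : (Finset.univ : Finset (Fin n)).card = n := by simp
    have := myhalf_lt (n := n) hn; omega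
  · omega

end Aux

/-- `F` contains a (weak) copy of the `W` poset: five distinct sets `a, b, c, d, e`
with `b ⊂ a`, `b ⊂ c`, `d ⊂ c`, `d ⊂ e`. -/
def ContainsW (n : ℕ) (F : Finset (Finset (Fin n))) : Prop :=
  ∃ a ∈ F, ∃ b ∈ F, ∃ c ∈ F, ∃ d ∈ F, ∃ e ∈ F,
    a ≠ b ∧ a ≠ c ∧ a ≠ d ∧ a ≠ e ∧ b ≠ c ∧ b ≠ d ∧ b ≠ e ∧ c ≠ d ∧ c ≠ e ∧ d ≠ e ∧
    b ⊂ a ∧ b ⊂ c ∧ d ⊂ c ∧ d ⊂ e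

/-- `F` contains a (weak) copy of the `M` poset (the dual of `W`): five distinct
sets `a, b, c, d, e` with `a ⊂ b`, `c ⊂ b`, `c ⊂ d`, `e ⊂ d`. -/
def ContainsM (n : ℕ) (F : Finset (Finset (Fin n))) : Prop :=
  ∃ a ∈ F, ∃ b ∈ F, ∃ c ∈ F, ∃ d ∈ F, ∃ e ∈ F,
    a ≠ b ∧ a ≠ c ∧ a ≠ d ∧ a ≠ e ∧ b ≠ c ∧ b ≠ d ∧ b ≠ e ∧ c ≠ d ∧ c ≠ e ∧ d ≠ e ∧
    a ⊂ b ∧ c ⊂ b ∧ c ⊂ d ∧ e ⊂ d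

theorem empty_middle_full_is_WM_free (n : ℕ) (hn : 2 ≤ n) :
    ¬ ContainsW n (insert ∅ (insert Finset.univ (Finset.univ.powersetCard (n / 2)))) ∧
    ¬ ContainsM n (insert ∅ (insert Finset.univ (Finset.univ.powersetCard (n / 2)))) ∧
    numTwoChains n (insert ∅ (insert Finset.univ (Finset.univ.powersetCard (n / 2)))) =
      2 * Nat.choose n (n / 2) + 1 := by
  have hnp : 0 < n := by omega
  have hhp := myhalf_pos hn
  have hhl := myhalf_lt hn
  have hUnonempty : (Finset.univ : Finset (Fin n)).Nonempty :=
    ⟨⟨0, hnp⟩, Finset.mem_univ _⟩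
  refine ⟨?_, ?_, ?_⟩
  · rintro ⟨a, ha, b, hb, c, hc, d, hd, e, he, hab, hac, had, hae, hbc, hbd, hbe,
      hcd, hce, hde, hba, hbc', hdc, hde'⟩
    rw [memF_iff] at ha hb hc hd he
    by_cases hbE : b = ∅
    · by_cases hdE : d = ∅
      · exact hbd (hbE.trans hdE.symm)
      · exact hce ((above_univ hd hc hdc hdE).trans (above_univ hd he hde' hdE).symm)
    · exact hac ((above_univ hb ha hba hbE).trans (above_univ hb hc hbc' hbE).symm)
  · rintro ⟨a, ha, b, hb, c, hc, d, hd, e, he, hab, hac, had, hae, hbc, hbd, hbe,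
      hcd, hce, hde, hab', hcb, hcd', hed⟩
    rw [memF_iff] at ha hb hc hd he
    by_cases hbU : b = Finset.univ
    · by_cases hdU : d = Finset.univ
      · exact hbd (hbU.trans hdU.symm)
      · exact hce ((below_empty hn hc hd hcd' hdU).trans (below_empty hn he hd hed hdU).symm)
    · exact hac ((below_empty hn ha hb hab' hbU).trans (below_empty hn hc hb hcb hbU).symm)
  · set Ms := (Finset.univ : Finset (Fin n)).powersetCard (n / 2) with hMs
    have hmemM : ∀ A : Finset (Fin n), A ∈ Ms ↔ A.card = n / 2 := by
      intro A; simp [hMs, Finset.mem_powersetCard_univ]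
    have hEM : (∅ : Finset (Fin n)) ∉ Ms := by
      rw [hmemM]; simp; omega
    have hUM : (Finset.univ : Finset (Fin n)) ∉ Ms := by
      rw [hmemM]; simp [Finset.card_univ]; omega
    have hset : ((insert ∅ (insert Finset.univ Ms) ×ˢ insert ∅ (insert Finset.univ Ms)).filter
        fun p : Finset (Fin n) × Finset (Fin n) => p.1 ⊂ p.2) =
        insert ((∅ : Finset (Fin n)), (Finset.univ : Finset (Fin n)))
          ((Ms.image fun A => ((∅ : Finset (Fin n)), A)) ∪
            Ms.image fun A => (A, (Finset.univ : Finset (Fin n)))) := by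
      ext ⟨x, y⟩
      simp only [Finset.mem_filter, Finset.mem_product, Finset.mem_insert, Finset.mem_union,
        Finset.mem_image, Prod.mk.injEq]
      constructor
      · rintro ⟨⟨hx, hy⟩, hxy⟩
        have hx' : x = ∅ ∨ x = Finset.univ ∨ x.card = n / 2 := by
          rcases hx with h|h|h
          · exact Or.inl h
          · exact Or.inr (Or.inl h)
          · exact Or.inr (Or.inr ((hmemM x).mp h))
        have hy' : y = ∅ ∨ y = Finset.univ ∨ y.card = n / 2 := by
          rcases hy with h|h|h
          · exact Or.inl h
          · exact Or.inr (Or.inl h)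
          · exact Or.inr (Or.inr ((hmemM y).mp h))
        by_cases hxE : x = ∅
        · subst hxE
          by_cases hyU : y = Finset.univ
          · exact Or.inl ⟨rfl, hyU⟩
          · refine Or.inr (Or.inl ⟨y, ?_, rfl, rfl⟩)
            rw [hmemM]
            rcases hy' with rfl|rfl|h
            · exact absurd hxy (by simp)
            · exact absurd rfl hyU
            · exact h
        · have hyU := above_univ hx' hy' hxy hxE
          subst hyU
          refine Or.inr (Or.inr ⟨x, ?_, rfl, rfl⟩)
          rw [hmemM]
          rcases hx' with rfl|rfl|h
          · exact absurd rfl hxE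
          · exact absurd hxy (ssubset_irrefl _)
          · exact h
      · rintro (⟨rfl, rfl⟩ | ⟨A, hA, rfl, rfl⟩ | ⟨A, hA, rfl, rfl⟩)
        · exact ⟨⟨Or.inl rfl, Or.inr (Or.inl rfl)⟩,
            Finset.empty_ssubset.mpr hUnonempty⟩
        · refine ⟨⟨Or.inl rfl, Or.inr (Or.inr hA)⟩, ?_⟩
          rw [Finset.empty_ssubset, ← Finset.card_pos, (hmemM A).mp hA]
          exact hhp
        · refine ⟨⟨Or.inr (Or.inr hA), Or.inr (Or.inl rfl)⟩, ?_⟩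
          rw [Finset.ssubset_univ_iff]
          intro h
          rw [h] at hA
          exact hUM hA
    rw [numTwoChains, hset]
    have hdisj : Disjoint (Ms.image fun A => ((∅ : Finset (Fin n)), A))
        (Ms.image fun A => (A, (Finset.univ : Finset (Fin n)))) := by
      rw [Finset.disjoint_left]
      rintro p hp hq
      simp only [Finset.mem_image, Prod.mk.injEq] at hp hq
      obtain ⟨A, hA, h1, h2⟩ := hp
      obtain ⟨B, hB, h3, h4⟩ := hq
      exact hEM hB
    have hnotmem : ((∅ : Finset (Fin n)), (Finset.univ : Finset (Fin n))) ∉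
        (Ms.image fun A => ((∅ : Finset (Fin n)), A)) ∪
          Ms.image fun A => (A, (Finset.univ : Finset (Fin n))) := by
      simp only [Finset.mem_union, Finset.mem_image, Prod.mk.injEq, not_or, not_exists]
      constructor
      · rintro A ⟨hA, _, rfl⟩; exact hUM hA
      · rintro A ⟨hA, rfl, _⟩; exact hEM hA
    rw [Finset.card_insert_of_notMem hnotmem, Finset.card_union_of_disjoint hdisj,
      Finset.card_image_of_injective _ (fun A B h => by simpa using h),
      Finset.card_image_of_injective _ (fun A B h => by simpa using h)]
    have : Ms.card = Nat.choose n (n / 2) := by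
      rw [hMs, Finset.card_powersetCard, Finset.card_univ, Fintype.card_fin]
    rw [this]; ring
end
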